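/- arXiv:1302.2676 — 6 statements merged into one kernel-verified Lean document; each statement's English description precedes it below -/
import Mathlib

section
/- Let n ≥ 1 and let C ⊆ ℝⁿ be a closed strongly convex cone with apex at the origin which is n-dimensional (has nonempty interior). Let Γ₁ and Γ₂ be cobounded C-convex regions. Then covol(Γ₁)^{1/n} + covol(Γ₂)^{1/n} ≥ covol(Γ₁ + Γ₂)^{1/n}, where Γ₁ + Γ₂ is the Minkowski sum. -/
/-!
Truncate at large radii and apply Brunn–Minkowski. Suppose `vol (C \ Γ₁) ≤ α ^ n` and
`vol (C \ Γ₂) ≤ β ^ n`, and let `v = vol (C ∩ B(0, 1))`. Take `ρ` large and put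
`μ ^ n = ρ ^ n v - 1`. The pieces `Kᵢ` of `Γᵢ` in the balls of radii `ρα`, `ρβ` have volumes at
least `(μα) ^ n` and `(μβ) ^ n`, so `vol (K₁ + K₂) ≥ (μ(α + β)) ^ n` by Brunn–Minkowski.
Every point of `C` outside the ball of radius `ρ(α + β)` splits into points of `Γ₁` and `Γ₂`.
Hence `C \ (Γ₁ + Γ₂)` lies in that truncation of `C` and misses `K₁ + K₂`, so its volume is at most
`(ρ(α + β)) ^ n v - (μ(α + β)) ^ n = (α + β) ^ n`. Letting `α` and `β` decrease to the `n`-th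
roots of the covolumes gives the inequality.

Brunn–Minkowski follows from the Prékopa–Leindler inequality. That inequality is proved by
induction on the dimension (Fubini) from the one-dimensional case, which comes from integrating
the one-dimensional inequality `|A| + |B| ≤ |A + B|` over the superlevel sets of the normalized
functions.
-/

open MeasureTheory Pointwise Set Metric Filter
open scoped ENNReal

namespace ENNReal

theorem rpow_one_sub_mul_rpow_self {x : ℝ≥0∞} (hx₀ : x ≠ 0) (hx : x ≠ ∞) (t : ℝ) :
    x ^ (1 - t) * x ^ t = x := by
  rw [← ENNReal.rpow_add _ _ hx₀ hx, sub_add_cancel, ENNReal.rpow_one]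

theorem rpow_one_sub_mul_rpow_le_add {t : ℝ} (ht₀ : 0 < t) (ht₁ : t < 1) (x y : ℝ≥0∞) :
    x ^ (1 - t) * y ^ t ≤ ENNReal.ofReal (1 - t) * x + ENNReal.ofReal t * y := by
  have ht₀' : 0 < 1 - t := sub_pos.mpr ht₁
  have := young_inequality (x ^ (1 - t)) (y ^ t) (Real.HolderConjugate.one_sub_inv_inv ht₀ ht₁)
  rwa [← ENNReal.rpow_mul, ← ENNReal.rpow_mul, mul_inv_cancel₀ ht₀'.ne', mul_inv_cancel₀ ht₀.ne',
    ENNReal.rpow_one, ENNReal.rpow_one, ENNReal.ofReal_inv_of_pos ht₀',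
    ENNReal.ofReal_inv_of_pos ht₀, ENNReal.div_eq_inv_mul, ENNReal.div_eq_inv_mul, inv_inv,
    inv_inv] at this

theorem iSup_rpow_mul_iSup_rpow {F G : ℕ → ℝ≥0∞} (hF : Monotone F) (hG : Monotone G)
    {p q : ℝ} (hp : 0 < p) (hq : 0 < q) :
    (⨆ k, F k) ^ p * (⨆ k, G k) ^ q = ⨆ k, F k ^ p * G k ^ q := by
  have hrpow : ∀ {r : ℝ} {H : ℕ → ℝ≥0∞}, 0 < r → (⨆ k, H k) ^ r = ⨆ k, H k ^ r := fun hr =>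
    Monotone.map_iSup_of_continuousAt ENNReal.continuous_rpow_const.continuousAt
      (ENNReal.monotone_rpow_of_nonneg hr.le) (ENNReal.zero_rpow_of_pos hr)
  rw [hrpow hp, hrpow hq, ENNReal.iSup_mul]
  simp_rw [ENNReal.mul_iSup]
  refine le_antisymm (iSup₂_le fun i j => le_iSup_of_le (max i j) ?_)
    (iSup_le fun k => le_iSup₂_of_le k k le_rfl)
  exact mul_le_mul' (ENNReal.rpow_le_rpow (hF (le_max_left i j)) hp.le)
    (ENNReal.rpow_le_rpow (hG (le_max_right i j)) hq.le)

end ENNReal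

namespace Real

theorem volume_add_volume_le_volume_add_of_isCompact {K L : Set ℝ} (hK : IsCompact K)
    (hL : IsCompact L) (hK₀ : K.Nonempty) (hL₀ : L.Nonempty) :
    volume K + volume L ≤ volume (K + L) := by
  set a := sSup K
  set b := sInf L
  have haK : a ∈ K := hK.sSup_mem hK₀
  have hbL : b ∈ L := hL.sInf_mem hL₀
  -- `b + K` lies left of `a + b` and `a + L` right of it
  have hoverlap : (b +ᵥ K) ∩ (a +ᵥ L) ⊆ {a + b} := by
    rintro _ ⟨⟨k, hk, rfl⟩, ⟨l, hl, hkl⟩⟩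
    have hka : k ≤ a := le_csSup hK.bddAbove hk
    have hbl : b ≤ l := csInf_le hL.bddBelow hl
    simp only [vadd_eq_add] at hkl ⊢
    rw [mem_singleton_iff]
    linarith
  have hsub : (b +ᵥ K) ∪ (a +ᵥ L) ⊆ K + L := by
    rintro _ (⟨k, hk, rfl⟩ | ⟨l, hl, rfl⟩)
    · simpa only [vadd_eq_add, add_comm b] using add_mem_add hk hbL
    · exact add_mem_add haK hl
  calc volume K + volume L = volume (b +ᵥ K) + volume (a +ᵥ L) := by
        rw [measure_vadd, measure_vadd]
    _ = volume ((b +ᵥ K) ∪ (a +ᵥ L)) :=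
        (measure_union₀ (hL.isClosed.measurableSet.const_vadd a).nullMeasurableSet
          (measure_mono_null hoverlap (measure_singleton _))).symm
    _ ≤ volume (K + L) := measure_mono hsub

theorem volume_add_volume_le_volume_add {A B : Set ℝ} (hA : MeasurableSet A)
    (hB : MeasurableSet B) (hA₀ : A.Nonempty) (hB₀ : B.Nonempty) :
    volume A + volume B ≤ volume (A + B) := by
  obtain ⟨a, ha⟩ := hA₀
  obtain ⟨b, hb⟩ := hB₀
  rw [hA.measure_eq_iSup_isCompact, hB.measure_eq_iSup_isCompact]
  simp only [iSup_and']
  refine ENNReal.biSup_add_biSup_le' ⟨∅, empty_subset _, isCompact_empty⟩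
    ⟨∅, empty_subset _, isCompact_empty⟩ fun K ⟨hKA, hK⟩ L ⟨hLB, hL⟩ => ?_
  calc volume K + volume L ≤ volume (insert a K) + volume (insert b L) :=
        add_le_add (measure_mono (subset_insert _ _)) (measure_mono (subset_insert _ _))
    _ ≤ volume (insert a K + insert b L) :=
        volume_add_volume_le_volume_add_of_isCompact (hK.insert a) (hL.insert b)
          (insert_nonempty _ _) (insert_nonempty _ _)
    _ ≤ volume (A + B) :=
        measure_mono (add_subset_add (insert_subset ha hKA) (insert_subset hb hLB))

end Real

theorem lintegral_min_one_eq_lintegral_meas_lt {α : Type*} [MeasurableSpace α] (μ : Measure α)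
    {f : α → ℝ≥0∞} (hf : AEMeasurable f μ) :
    ∫⁻ x, min (f x) 1 ∂μ = ∫⁻ s in Ioo (0 : ℝ) 1, μ {x | ENNReal.ofReal s < f x} := by
  have hmin : ∀ x, min (f x) 1 = ENNReal.ofReal (min (f x) 1).toReal := fun x =>
    (ENNReal.ofReal_toReal (ne_top_of_le_ne_top ENNReal.one_ne_top (min_le_right _ _))).symm
  rw [lintegral_congr hmin,
    lintegral_eq_lintegral_meas_lt μ (ae_of_all _ fun _ => ENNReal.toReal_nonneg)
      (hf.min aemeasurable_const).ennreal_toReal, ← Ioo_union_Ici_eq_Ioi zero_lt_one,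
    lintegral_union measurableSet_Ici ((Iio_disjoint_Ici le_rfl).mono_left Ioo_subset_Iio_self)]
  have hlarge : ∀ s ∈ Ici (1 : ℝ), μ {x | s < (min (f x) 1).toReal} = 0 := fun s hs => by
    have : {x | s < (min (f x) 1).toReal} = ∅ := eq_empty_of_forall_notMem fun x hx =>
      (ENNReal.toReal_le_of_le_ofReal zero_le_one (by simp)).not_gt (hx.trans_le' hs)
    simp [this]
  rw [setLIntegral_congr_fun measurableSet_Ici hlarge, lintegral_zero, add_zero]
  refine setLIntegral_congr_fun measurableSet_Ioo fun s hs => ?_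
  congr 1
  ext x
  rw [mem_ofPred_eq, mem_ofPred_eq, ← ENNReal.ofReal_lt_iff_lt_toReal hs.1.le (by simp)]
  simp [hs.2]

theorem lintegral_fin_zero_eq {E : Type*} [MeasureSpace E] (φ : (Fin 0 → E) → ℝ≥0∞)
    (x : Fin 0 → E) :
    ∫⁻ y, φ y = φ x := by
  rw [volume_pi, Measure.pi_of_empty _ x, lintegral_dirac]

theorem lintegral_eq_lintegral_lintegral_fin_cons {E : Type*} [MeasureSpace E]
    [SigmaFinite (volume : Measure E)] {n : ℕ} {φ : (Fin (n + 1) → E) → ℝ≥0∞}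
    (hφ : Measurable φ) :
    ∫⁻ x, φ x = ∫⁻ a, ∫⁻ z, φ (Fin.cons a z) := by
  have he := (volume_preserving_piFinSuccAbove (fun _ : Fin (n + 1) => E) 0).symm
  rw [← he.lintegral_comp hφ, Measure.volume_eq_prod]
  refine (lintegral_prod (μ := volume) (ν := volume) _
    (hφ.comp he.measurable).aemeasurable).trans ?_
  simp [MeasurableEquiv.piFinSuccAbove_symm_apply, Fin.consEquiv]

section PrekopaLeindler

variable {t : ℝ}

theorem prekopa_leindler_superlevel (ht₀ : 0 < t) (ht₁ : t < 1)
    {f g h : ℝ → ℝ≥0∞} (hf : Measurable f) (hg : Measurable g)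
    (hf₁ : ⨆ x, f x = 1) (hg₁ : ⨆ x, g x = 1)
    (hfgh : ∀ x y, f x ^ (1 - t) * g y ^ t ≤ h ((1 - t) * x + t * y)) {s : ℝ} (hs₀ : 0 < s)
    (hs₁ : s < 1) :
    ENNReal.ofReal (1 - t) * volume {x | ENNReal.ofReal s < f x} +
        ENNReal.ofReal t * volume {x | ENNReal.ofReal s < g x} ≤
      volume {x | ENNReal.ofReal s < h x} := by
  have ht₀' : 0 < 1 - t := sub_pos.mpr ht₁
  have hs : ENNReal.ofReal s < 1 := ENNReal.ofReal_lt_one.mpr hs₁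
  set A := {x | ENNReal.ofReal s < f x}
  set B := {x | ENNReal.ofReal s < g x}
  have hA₀ : A.Nonempty := by
    obtain ⟨x, hx⟩ := lt_iSup_iff.mp (hf₁ ▸ hs : _ < ⨆ x, f x)
    exact ⟨x, hx⟩
  have hB₀ : B.Nonempty := by
    obtain ⟨y, hy⟩ := lt_iSup_iff.mp (hg₁ ▸ hs : _ < ⨆ y, g y)
    exact ⟨y, hy⟩
  have hAB : (1 - t) • A + t • B ⊆ {x | ENNReal.ofReal s < h x} := by
    rintro _ ⟨_, ⟨x, hx, rfl⟩, _, ⟨y, hy, rfl⟩, rfl⟩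
    refine lt_of_lt_of_le ?_ (hfgh x y)
    calc ENNReal.ofReal s = ENNReal.ofReal s ^ (1 - t) * ENNReal.ofReal s ^ t :=
          (ENNReal.rpow_one_sub_mul_rpow_self (by simpa using hs₀) ENNReal.ofReal_ne_top t).symm
      _ < f x ^ (1 - t) * g y ^ t :=
          ENNReal.mul_lt_mul (ENNReal.rpow_lt_rpow hx ht₀') (ENNReal.rpow_lt_rpow hy ht₀)
  calc ENNReal.ofReal (1 - t) * volume A + ENNReal.ofReal t * volume B
      = volume ((1 - t) • A) + volume (t • B) := by
        simp [Measure.addHaar_smul, abs_of_pos ht₀, abs_of_pos ht₀']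
    _ ≤ volume ((1 - t) • A + t • B) :=
        Real.volume_add_volume_le_volume_add ((hf measurableSet_Ioi).const_smul₀ _)
          ((hg measurableSet_Ioi).const_smul₀ _) hA₀.smul_set hB₀.smul_set
    _ ≤ _ := measure_mono hAB

theorem prekopa_leindler_real_of_iSup_eq_one (ht₀ : 0 < t) (ht₁ : t < 1)
    {f g h : ℝ → ℝ≥0∞} (hf : Measurable f) (hg : Measurable g) (hh : Measurable h)
    (hf₁ : ⨆ x, f x = 1) (hg₁ : ⨆ x, g x = 1)
    (hfgh : ∀ x y, f x ^ (1 - t) * g y ^ t ≤ h ((1 - t) * x + t * y)) :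
    ENNReal.ofReal (1 - t) * (∫⁻ x, f x) + ENNReal.ofReal t * (∫⁻ x, g x) ≤ ∫⁻ x, h x := by
  have hf_min : ∫⁻ x, f x = ∫⁻ x, min (f x) 1 :=
    lintegral_congr fun x => (min_eq_left (hf₁ ▸ le_iSup f x)).symm
  have hg_min : ∫⁻ x, g x = ∫⁻ x, min (g x) 1 :=
    lintegral_congr fun x => (min_eq_left (hg₁ ▸ le_iSup g x)).symm
  rw [hf_min, hg_min, lintegral_min_one_eq_lintegral_meas_lt _ hf.aemeasurable,
    lintegral_min_one_eq_lintegral_meas_lt _ hg.aemeasurable]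
  calc _ ≤ ∫⁻ s in Ioo (0 : ℝ) 1,
          (ENNReal.ofReal (1 - t) * volume {x | ENNReal.ofReal s < f x} +
            ENNReal.ofReal t * volume {x | ENNReal.ofReal s < g x}) :=
        (add_le_add (lintegral_const_mul_le _ _) (lintegral_const_mul_le _ _)).trans
          (le_lintegral_add _ _)
    _ ≤ ∫⁻ s in Ioo (0 : ℝ) 1, volume {x | ENNReal.ofReal s < h x} :=
        setLIntegral_mono' measurableSet_Ioo fun s hs =>
          prekopa_leindler_superlevel ht₀ ht₁ hf hg hf₁ hg₁ hfgh hs.1 hs.2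
    _ = ∫⁻ x, min (h x) 1 := (lintegral_min_one_eq_lintegral_meas_lt _ hh.aemeasurable).symm
    _ ≤ ∫⁻ x, h x := lintegral_mono fun x => min_le_left _ _

theorem prekopa_leindler_real_of_iSup_ne_top (ht₀ : 0 < t) (ht₁ : t < 1)
    {f g h : ℝ → ℝ≥0∞} (hf : Measurable f) (hg : Measurable g) (hh : Measurable h)
    (hf_top : ⨆ x, f x ≠ ∞) (hg_top : ⨆ x, g x ≠ ∞)
    (hfgh : ∀ x y, f x ^ (1 - t) * g y ^ t ≤ h ((1 - t) * x + t * y)) :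
    (∫⁻ x, f x) ^ (1 - t) * (∫⁻ x, g x) ^ t ≤ ∫⁻ x, h x := by
  have ht₀' : 0 < 1 - t := sub_pos.mpr ht₁
  set M := ⨆ x, f x
  set N := ⨆ x, g x
  obtain hM | hM := eq_or_ne M 0
  · simp [ENNReal.iSup_eq_zero.mp hM, ENNReal.zero_rpow_of_pos ht₀']
  obtain hN | hN := eq_or_ne N 0
  · simp [ENNReal.iSup_eq_zero.mp hN, ENNReal.zero_rpow_of_pos ht₀]
  -- rescale `f`, `g` to supremum `1`, and `h` by the factor that keeps the hypothesis valid
  set c := M ^ (1 - t) * N ^ t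
  have hM₀ : M ^ (1 - t) ≠ 0 := (ENNReal.rpow_pos (pos_iff_ne_zero.2 hM) hf_top).ne'
  have hM_top : M ^ (1 - t) ≠ ∞ := ENNReal.rpow_ne_top_of_nonneg ht₀'.le hf_top
  have hc₀ : c ≠ 0 := mul_ne_zero hM₀ (ENNReal.rpow_pos (pos_iff_ne_zero.2 hN) hg_top).ne'
  have hc_top : c ≠ ∞ := ENNReal.mul_ne_top hM_top (ENNReal.rpow_ne_top_of_nonneg ht₀.le hg_top)
  have hscale : ∀ x y : ℝ≥0∞,
      (M⁻¹ * x) ^ (1 - t) * (N⁻¹ * y) ^ t = c⁻¹ * (x ^ (1 - t) * y ^ t) := by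
    intro x y
    rw [ENNReal.mul_rpow_of_nonneg _ _ ht₀'.le, ENNReal.mul_rpow_of_nonneg _ _ ht₀.le,
      ENNReal.inv_rpow, ENNReal.inv_rpow, ENNReal.mul_inv (.inl hM₀) (.inl hM_top)]
    ring
  have hnorm := prekopa_leindler_real_of_iSup_eq_one ht₀ ht₁ (hf.const_mul M⁻¹)
    (hg.const_mul N⁻¹) (hh.const_mul c⁻¹)
    (by rw [← ENNReal.mul_iSup, ENNReal.inv_mul_cancel hM hf_top])
    (by rw [← ENNReal.mul_iSup, ENNReal.inv_mul_cancel hN hg_top])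
    (fun x y => (hscale _ _).trans_le (mul_le_mul_right (hfgh x y) _))
  rw [lintegral_const_mul _ hf, lintegral_const_mul _ hg, lintegral_const_mul _ hh] at hnorm
  rw [← ENNReal.mul_le_mul_iff_right (ENNReal.inv_ne_zero.mpr hc_top)
    (ENNReal.inv_ne_top.mpr hc₀), ← hscale]
  exact (ENNReal.rpow_one_sub_mul_rpow_le_add ht₀ ht₁ _ _).trans hnorm

theorem prekopa_leindler_real (ht₀ : 0 < t) (ht₁ : t < 1)
    {f g h : ℝ → ℝ≥0∞} (hf : Measurable f) (hg : Measurable g) (hh : Measurable h)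
    (hfgh : ∀ x y, f x ^ (1 - t) * g y ^ t ≤ h ((1 - t) * x + t * y)) :
    (∫⁻ x, f x) ^ (1 - t) * (∫⁻ x, g x) ^ t ≤ ∫⁻ x, h x := by
  have ht₀' : 0 < 1 - t := sub_pos.mpr ht₁
  have htrunc : ∀ φ : ℝ → ℝ≥0∞, Measurable φ → ∫⁻ x, φ x = ⨆ k : ℕ, ∫⁻ x, φ x ⊓ k :=
    fun φ hφ => by
      rw [← lintegral_iSup (f := fun k x => φ x ⊓ k) (fun k => hφ.inf measurable_const)
        (fun i j hij x => inf_le_inf_left _ (Nat.mono_cast hij))]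
      simp_rw [← inf_iSup_eq, ENNReal.iSup_natCast, inf_top_eq]
  have hmono : ∀ φ : ℝ → ℝ≥0∞, Monotone fun k : ℕ => ∫⁻ x, φ x ⊓ k := fun φ i j hij =>
    lintegral_mono fun x => inf_le_inf_left _ (Nat.mono_cast hij)
  rw [htrunc f hf, htrunc g hg, ENNReal.iSup_rpow_mul_iSup_rpow (hmono f) (hmono g) ht₀' ht₀]
  refine iSup_le fun k => prekopa_leindler_real_of_iSup_ne_top ht₀ ht₁
    (hf.inf measurable_const) (hg.inf measurable_const) hh
    (ne_top_of_le_ne_top (ENNReal.natCast_ne_top k) (iSup_le fun _ => inf_le_right))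
    (ne_top_of_le_ne_top (ENNReal.natCast_ne_top k) (iSup_le fun _ => inf_le_right))
    fun x y => le_trans ?_ (hfgh x y)
  exact mul_le_mul' (ENNReal.rpow_le_rpow inf_le_left ht₀'.le)
    (ENNReal.rpow_le_rpow inf_le_left ht₀.le)

theorem prekopa_leindler {n : ℕ} (ht₀ : 0 < t) (ht₁ : t < 1)
    {f g h : (Fin n → ℝ) → ℝ≥0∞} (hf : Measurable f) (hg : Measurable g) (hh : Measurable h)
    (hfgh : ∀ x y, f x ^ (1 - t) * g y ^ t ≤ h ((1 - t) • x + t • y)) :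
    (∫⁻ x, f x) ^ (1 - t) * (∫⁻ x, g x) ^ t ≤ ∫⁻ x, h x := by
  induction n with
  | zero =>
    simp only [lintegral_fin_zero_eq _ 0]
    simpa using hfgh 0 0
  | succ n ih =>
    have hcons : ∀ {φ : (Fin (n + 1) → ℝ) → ℝ≥0∞}, Measurable φ →
        Measurable fun p : ℝ × (Fin n → ℝ) => φ (Fin.cons p.1 p.2) := fun hφ =>
      hφ.comp (measurable_pi_lambda _ fun i => by
        cases i using Fin.cases
        · simpa using measurable_fst
        · simpa using measurable_snd.eval)
    rw [lintegral_eq_lintegral_lintegral_fin_cons hf,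
      lintegral_eq_lintegral_lintegral_fin_cons hg, lintegral_eq_lintegral_lintegral_fin_cons hh]
    refine prekopa_leindler_real ht₀ ht₁ (hcons hf).lintegral_prod_right'
      (hcons hg).lintegral_prod_right' (hcons hh).lintegral_prod_right' fun a b =>
      ih ((hcons hf).comp measurable_prodMk_left) ((hcons hg).comp measurable_prodMk_left)
        ((hcons hh).comp measurable_prodMk_left) fun x y => ?_
    convert hfgh (Fin.cons a x) (Fin.cons b y) using 2
    ext i
    cases i using Fin.cases <;> simp

end PrekopaLeindler

theorem brunn_minkowski_mul {n : ℕ} {t : ℝ} (ht₀ : 0 < t) (ht₁ : t < 1)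
    {A B : Set (Fin n → ℝ)} (hA : MeasurableSet A) (hB : MeasurableSet B) :
    volume A ^ (1 - t) * volume B ^ t ≤ volume ((1 - t) • A + t • B) := by
  have ht₀' : 0 < 1 - t := sub_pos.mpr ht₁
  set S := toMeasurable volume ((1 - t) • A + t • B)
  have hPL := prekopa_leindler (f := A.indicator 1) (g := B.indicator 1) (h := S.indicator 1)
    ht₀ ht₁ (measurable_one.indicator hA) (measurable_one.indicator hB)
    (measurable_one.indicator (measurableSet_toMeasurable _ _)) fun x y => by
      by_cases hx : x ∈ A
      · by_cases hy : y ∈ B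
        · have hxy : (1 - t) • x + t • y ∈ S :=
            subset_toMeasurable _ _ (add_mem_add (smul_mem_smul_set hx) (smul_mem_smul_set hy))
          simp [hx, hy, hxy]
        · simp [hy, ENNReal.zero_rpow_of_pos ht₀]
      · simp [hx, ENNReal.zero_rpow_of_pos ht₀']
  rwa [lintegral_indicator_one hA, lintegral_indicator_one hB,
    lintegral_indicator_one (measurableSet_toMeasurable _ _), measure_toMeasurable] at hPL

theorem brunn_minkowski {n : ℕ} {K L : Set (Fin n → ℝ)} (hK : MeasurableSet K)
    (hL : MeasurableSet L) {k l : ℝ} (hk : 0 < k) (hl : 0 < l)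
    (hKk : ENNReal.ofReal (k ^ n) ≤ volume K) (hLl : ENNReal.ofReal (l ^ n) ≤ volume L) :
    ENNReal.ofReal ((k + l) ^ n) ≤ volume (K + L) := by
  set t := l / (k + l) with ht
  have ht₀ : 0 < t := by positivity
  have ht₁ : t < 1 := (div_lt_one (by positivity)).mpr (by linarith)
  have hdilate : ∀ {r : ℝ} {D : Set (Fin n → ℝ)}, 0 < r → ENNReal.ofReal (r ^ n) ≤ volume D →
      ENNReal.ofReal ((k + l) ^ n) ≤ volume (((k + l) / r) • D) := fun {r} {D} hr hD => by
    rw [Measure.addHaar_smul, Module.finrank_fin_fun, abs_of_pos (by positivity)]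
    calc ENNReal.ofReal ((k + l) ^ n)
        = ENNReal.ofReal (((k + l) / r) ^ n) * ENNReal.ofReal (r ^ n) := by
          rw [← ENNReal.ofReal_mul (by positivity), ← mul_pow, div_mul_cancel₀ _ hr.ne']
      _ ≤ _ := mul_le_mul_right hD _
  have hcomb : (1 - t) • ((k + l) / k) • K + t • ((k + l) / l) • L = K + L := by
    have hK' : (1 - t) * ((k + l) / k) = 1 := by rw [ht]; field_simp; ring
    have hL' : t * ((k + l) / l) = 1 := by rw [ht]; field_simp
    rw [smul_smul, smul_smul, hK', hL', one_smul, one_smul]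
  have hc₀ : ENNReal.ofReal ((k + l) ^ n) ≠ 0 := by simp; positivity
  calc ENNReal.ofReal ((k + l) ^ n)
      = ENNReal.ofReal ((k + l) ^ n) ^ (1 - t) * ENNReal.ofReal ((k + l) ^ n) ^ t :=
        (ENNReal.rpow_one_sub_mul_rpow_self hc₀ ENNReal.ofReal_ne_top t).symm
    _ ≤ volume (((k + l) / k) • K) ^ (1 - t) * volume (((k + l) / l) • L) ^ t :=
        mul_le_mul' (ENNReal.rpow_le_rpow (hdilate hk hKk) (by linarith))
          (ENNReal.rpow_le_rpow (hdilate hl hLl) ht₀.le)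
    _ ≤ volume (K + L) :=
        hcomb ▸ brunn_minkowski_mul ht₀ ht₁ (hK.const_smul₀ _) (hL.const_smul₀ _)

theorem MeasureTheory.Measure.addHaar_cone_inter_closedBall {E : Type*} [NormedAddCommGroup E]
    [NormedSpace ℝ E] [MeasurableSpace E] [BorelSpace E] [FiniteDimensional ℝ E]
    (μ : Measure E) [μ.IsAddHaarMeasure] {C : Set E}
    (hC : ∀ x ∈ C, ∀ t : ℝ, 0 < t → t • x ∈ C) {r : ℝ} (hr : 0 < r) :
    μ (C ∩ closedBall 0 r) =
      ENNReal.ofReal (r ^ Module.finrank ℝ E) * μ (C ∩ closedBall 0 1) := by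
  have hrC : r • C = C := Set.ext fun x => by
    rw [mem_smul_set_iff_inv_smul_mem₀ hr.ne']
    exact ⟨fun hx => by simpa [smul_smul, hr.ne'] using hC _ hx r hr,
      fun hx => hC x hx _ (inv_pos.mpr hr)⟩
  rw [← Measure.addHaar_smul_of_nonneg μ hr.le, smul_set_inter₀ hr.ne', hrC,
    _root_.smul_closedBall _ _ zero_le_one, smul_zero, Real.norm_of_nonneg hr.le, mul_one]

theorem cone_sdiff_add_subset_closedBall {E : Type*} [NormedAddCommGroup E] [NormedSpace ℝ E]
    {C Γ₁ Γ₂ : Set E} (hC : ∀ x ∈ C, ∀ t : ℝ, 0 < t → t • x ∈ C) {r₁ r₂ : ℝ} (hr₁ : 0 < r₁)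
    (hr₂ : 0 < r₂) (h₁ : C \ Γ₁ ⊆ closedBall 0 r₁) (h₂ : C \ Γ₂ ⊆ closedBall 0 r₂) :
    C \ (Γ₁ + Γ₂) ⊆ closedBall 0 (r₁ + r₂) := by
  rintro x ⟨hxC, hxΓ⟩
  by_contra hxr
  rw [mem_closedBall_zero_iff, not_le] at hxr
  -- split `x` in the ratio `r₁ : r₂`: each part is too long to lie outside its `Γᵢ`
  have hpart : ∀ {Γ : Set E} {r : ℝ}, 0 < r → C \ Γ ⊆ closedBall 0 r →
      (r / (r₁ + r₂)) • x ∈ Γ := fun {Γ} {r} hr hΓ => by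
    by_contra hxΓ'
    have hle := mem_closedBall_zero_iff.mp (hΓ ⟨hC x hxC _ (by positivity), hxΓ'⟩)
    rw [norm_smul, Real.norm_of_nonneg (by positivity), div_mul_eq_mul_div,
      div_le_iff₀ (by positivity)] at hle
    nlinarith
  refine hxΓ ⟨_, hpart hr₁ h₁, _, hpart hr₂ h₂, ?_⟩
  show (r₁ / (r₁ + r₂)) • x + (r₂ / (r₁ + r₂)) • x = x
  rw [← add_smul, ← add_div, div_self (add_pos hr₁ hr₂).ne', one_smul]

theorem MeasureTheory.le_measure_inter_of_measure_sdiff_le {α : Type*} [MeasurableSpace α]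
    {μ : Measure α} {C B Γ : Set α} (hΓ : MeasurableSet Γ) (hB : C \ Γ ⊆ B) {a b : ℝ≥0∞}
    (hb : b ≠ ∞) (hCB : μ (C ∩ B) = a + b) (hCΓ : μ (C \ Γ) ≤ b) :
    a ≤ μ (C ∩ B ∩ Γ) := by
  have hsplit := measure_inter_add_sdiff (μ := μ) (C ∩ B) hΓ
  rw [inter_sdiff_right_comm, inter_eq_left.mpr hB, hCB] at hsplit
  exact ENNReal.le_of_add_le_add_right hb (hsplit ▸ add_le_add_right hCΓ _)

theorem MeasureTheory.Measure.addHaar_cone_sdiff_add_eq_zero {E : Type*} [NormedAddCommGroup E]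
    [NormedSpace ℝ E] [MeasurableSpace E] [BorelSpace E] [FiniteDimensional ℝ E]
    (μ : Measure E) [μ.IsAddHaarMeasure] {C Γ₁ Γ₂ : Set E}
    (hC : ∀ x ∈ C, ∀ t : ℝ, 0 < t → t • x ∈ C) {R : ℝ} (h₁ : C \ Γ₁ ⊆ closedBall 0 R)
    (h₂ : C \ Γ₂ ⊆ closedBall 0 R) (hC₀ : μ (C ∩ closedBall 0 1) = 0) :
    μ (C \ (Γ₁ + Γ₂)) = 0 := by
  set r := max R 1
  have hr : 0 < r := lt_max_of_lt_right one_pos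
  have hRr : closedBall (0 : E) R ⊆ closedBall 0 r := closedBall_subset_closedBall (le_max_left _ _)
  refine measure_mono_null (t := C ∩ closedBall 0 (r + r)) (fun x hx =>
    ⟨hx.1, cone_sdiff_add_subset_closedBall hC hr hr (h₁.trans hRr) (h₂.trans hRr) hx⟩) ?_
  rw [Measure.addHaar_cone_inter_closedBall μ hC (by positivity), hC₀, mul_zero]

section Covolume

variable {n : ℕ} {C Γ₁ Γ₂ : Set (Fin n → ℝ)}

theorem volume_sdiff_add_le_sub (hC : IsClosed C) (hCadd : ∀ x ∈ C, ∀ y ∈ C, x + y ∈ C)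
    (hCsmul : ∀ x ∈ C, ∀ t : ℝ, 0 < t → t • x ∈ C) (hΓ₁ : IsClosed Γ₁) (hΓ₂ : IsClosed Γ₂)
    {r₁ r₂ k₁ k₂ : ℝ} (hr₁ : 0 < r₁) (hr₂ : 0 < r₂) (hk₁ : 0 < k₁) (hk₂ : 0 < k₂)
    (h₁ : C \ Γ₁ ⊆ closedBall 0 r₁) (h₂ : C \ Γ₂ ⊆ closedBall 0 r₂)
    (hK₁ : ENNReal.ofReal (k₁ ^ n) ≤ volume (C ∩ closedBall 0 r₁ ∩ Γ₁))
    (hK₂ : ENNReal.ofReal (k₂ ^ n) ≤ volume (C ∩ closedBall 0 r₂ ∩ Γ₂)) :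
    volume (C \ (Γ₁ + Γ₂)) ≤
      volume (C ∩ closedBall 0 (r₁ + r₂)) - ENNReal.ofReal ((k₁ + k₂) ^ n) := by
  set K₁ := C ∩ closedBall 0 r₁ ∩ Γ₁
  set K₂ := C ∩ closedBall 0 r₂ ∩ Γ₂
  have hK₁c : IsCompact K₁ := ((isCompact_closedBall 0 r₁).inter_left hC).inter_right hΓ₁
  have hK₂c : IsCompact K₂ := ((isCompact_closedBall 0 r₂).inter_left hC).inter_right hΓ₂
  have hKc := hK₁c.add hK₂c
  have hKsub : K₁ + K₂ ⊆ C ∩ closedBall 0 (r₁ + r₂) := by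
    rintro _ ⟨x, ⟨⟨hxC, hx⟩, -⟩, y, ⟨⟨hyC, hy⟩, -⟩, rfl⟩
    rw [mem_closedBall_zero_iff] at hx hy
    exact ⟨hCadd x hxC y hyC,
      mem_closedBall_zero_iff.mpr ((norm_add_le x y).trans (add_le_add hx hy))⟩
  calc volume (C \ (Γ₁ + Γ₂)) ≤ volume ((C ∩ closedBall 0 (r₁ + r₂)) \ (K₁ + K₂)) :=
        measure_mono fun x hx =>
          ⟨⟨hx.1, cone_sdiff_add_subset_closedBall hCsmul hr₁ hr₂ h₁ h₂ hx⟩,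
            fun hxK => hx.2 (add_subset_add inter_subset_right inter_subset_right hxK)⟩
    _ = volume (C ∩ closedBall 0 (r₁ + r₂)) - volume (K₁ + K₂) :=
        measure_sdiff hKsub hKc.measurableSet.nullMeasurableSet hKc.measure_lt_top.ne
    _ ≤ _ := tsub_le_tsub_left
        (brunn_minkowski hK₁c.measurableSet hK₂c.measurableSet hk₁ hk₂ hK₁ hK₂) _

theorem volume_sdiff_add_le_of_le_pow (hn : n ≠ 0) (hC : IsClosed C)
    (hCadd : ∀ x ∈ C, ∀ y ∈ C, x + y ∈ C) (hCsmul : ∀ x ∈ C, ∀ t : ℝ, 0 < t → t • x ∈ C)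
    (hΓ₁ : IsClosed Γ₁) (hΓ₂ : IsClosed Γ₂) (hΓ₁b : Bornology.IsBounded (C \ Γ₁))
    (hΓ₂b : Bornology.IsBounded (C \ Γ₂)) {α β : ℝ} (hα : 0 < α) (hβ : 0 < β)
    (h₁ : volume (C \ Γ₁) ≤ ENNReal.ofReal (α ^ n))
    (h₂ : volume (C \ Γ₂) ≤ ENNReal.ofReal (β ^ n)) :
    volume (C \ (Γ₁ + Γ₂)) ≤ ENNReal.ofReal ((α + β) ^ n) := by
  obtain ⟨R, hR⟩ := (hΓ₁b.union hΓ₂b).subset_closedBall 0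
  have hR₁ : C \ Γ₁ ⊆ closedBall 0 R := subset_union_left.trans hR
  have hR₂ : C \ Γ₂ ⊆ closedBall 0 R := subset_union_right.trans hR
  set V := volume (C ∩ closedBall 0 1)
  obtain hV | hV := eq_or_ne V 0
  · exact (Measure.addHaar_cone_sdiff_add_eq_zero volume hCsmul hR₁ hR₂ hV).trans_le zero_le
  have hV_top : V ≠ ∞ := (isBounded_closedBall.subset inter_subset_right).measure_lt_top.ne
  set v := V.toReal
  have hv : 0 < v := ENNReal.toReal_pos hV hV_top
  have hscale : ∀ r : ℝ, 0 < r → volume (C ∩ closedBall 0 r) = ENNReal.ofReal (r ^ n * v) :=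
    fun r hr => by
      rw [Measure.addHaar_cone_inter_closedBall volume hCsmul hr, Module.finrank_fin_fun,
        ENNReal.ofReal_mul (by positivity), ENNReal.ofReal_toReal hV_top]
  obtain ⟨ρ, hρ, hRα, hRβ, hρv⟩ : ∃ ρ : ℝ, 0 < ρ ∧ R ≤ ρ * α ∧ R ≤ ρ * β ∧ 1 < ρ ^ n * v :=
    ((eventually_gt_atTop 0).and (((tendsto_id.atTop_mul_const hα).eventually_ge_atTop R).and
      (((tendsto_id.atTop_mul_const hβ).eventually_ge_atTop R).and
        (((tendsto_pow_atTop hn).atTop_mul_const hv).eventually_gt_atTop 1)))).exists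
  have h₁' : C \ Γ₁ ⊆ closedBall 0 (ρ * α) := hR₁.trans (closedBall_subset_closedBall hRα)
  have h₂' : C \ Γ₂ ⊆ closedBall 0 (ρ * β) := hR₂.trans (closedBall_subset_closedBall hRβ)
  -- `μ` is chosen so that `vol (C ∩ closedBall 0 (ρ * γ)) = (μ * γ) ^ n + γ ^ n`
  set μ := (ρ ^ n * v - 1) ^ (n⁻¹ : ℝ)
  have hμ : 0 < μ := Real.rpow_pos_of_pos (by linarith) _
  have hμn : μ ^ n = ρ ^ n * v - 1 := Real.rpow_inv_natCast_pow (by linarith) hn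
  have hpiece : ∀ {Γ : Set (Fin n → ℝ)} {γ : ℝ}, IsClosed Γ → 0 < γ →
      volume (C \ Γ) ≤ ENNReal.ofReal (γ ^ n) → C \ Γ ⊆ closedBall 0 (ρ * γ) →
      ENNReal.ofReal ((μ * γ) ^ n) ≤ volume (C ∩ closedBall 0 (ρ * γ) ∩ Γ) :=
    fun hΓ hγ hΓγ hΓρ => le_measure_inter_of_measure_sdiff_le hΓ.measurableSet hΓρ
      ENNReal.ofReal_ne_top (by
        rw [hscale _ (by positivity), ← ENNReal.ofReal_add (by positivity) (by positivity),
          mul_pow, mul_pow, hμn]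
        ring_nf) hΓγ
  calc volume (C \ (Γ₁ + Γ₂))
      ≤ volume (C ∩ closedBall 0 (ρ * α + ρ * β)) - ENNReal.ofReal ((μ * α + μ * β) ^ n) :=
        volume_sdiff_add_le_sub hC hCadd hCsmul hΓ₁ hΓ₂ (by positivity) (by positivity)
          (by positivity) (by positivity) h₁' h₂' (hpiece hΓ₁ hα h₁ h₁') (hpiece hΓ₂ hβ h₂ h₂')
    _ = ENNReal.ofReal ((α + β) ^ n) := by
        rw [hscale _ (by positivity), ← ENNReal.ofReal_sub _ (by positivity)]
        congr 1
        rw [← mul_add, ← mul_add, mul_pow, mul_pow, hμn]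
        ring

end Covolume

theorem Real.rpow_one_div_le_add_of_forall_le_pow {n : ℕ} (hn : n ≠ 0) {x a b : ℝ}
    (hx : 0 ≤ x) (ha : 0 ≤ a) (hb : 0 ≤ b)
    (h : ∀ α β : ℝ, 0 < α → 0 < β → a ≤ α ^ n → b ≤ β ^ n → x ≤ (α + β) ^ n) :
    x ^ ((1 : ℝ) / n) ≤ a ^ ((1 : ℝ) / n) + b ^ ((1 : ℝ) / n) := by
  have hroot : ∀ {y : ℝ}, 0 ≤ y → (y ^ ((1 : ℝ) / n)) ^ n = y := fun hy => by
    rw [one_div, Real.rpow_inv_natCast_pow hy hn]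
  refine le_of_forall_pos_le_add fun ε hε => ?_
  set α := a ^ ((1 : ℝ) / n) + ε / 2
  set β := b ^ ((1 : ℝ) / n) + ε / 2
  have hαβ := h α β (by positivity) (by positivity)
    (hroot ha ▸ pow_le_pow_left₀ (by positivity) (le_add_of_nonneg_right (by positivity)) n)
    (hroot hb ▸ pow_le_pow_left₀ (by positivity) (le_add_of_nonneg_right (by positivity)) n)
  calc x ^ ((1 : ℝ) / n) ≤ ((α + β) ^ n) ^ ((1 : ℝ) / n) :=
        Real.rpow_le_rpow hx hαβ (by positivity)
    _ = α + β := by rw [one_div, Real.pow_rpow_inv_natCast (by positivity) hn]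
    _ = _ := by ring

theorem brunn_minkowski_covolume_general
    (n : ℕ) (hn : 1 ≤ n) (C : Set (Fin n → ℝ))
    (hCclosed : IsClosed C)
    (hCadd : ∀ x ∈ C, ∀ y ∈ C, x + y ∈ C)
    (hCsmul : ∀ x ∈ C, ∀ t : ℝ, 0 ≤ t → t • x ∈ C)
    (Γ₁ Γ₂ : Set (Fin n → ℝ))
    (hΓ₁closed : IsClosed Γ₁) (hΓ₁cobdd : Bornology.IsBounded (C \ Γ₁))
    (hΓ₂closed : IsClosed Γ₂) (hΓ₂cobdd : Bornology.IsBounded (C \ Γ₂)) :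
    (volume (C \ (Γ₁ + Γ₂))).toReal ^ ((1 : ℝ) / n) ≤
      (volume (C \ Γ₁)).toReal ^ ((1 : ℝ) / n) +
        (volume (C \ Γ₂)).toReal ^ ((1 : ℝ) / n) := by
  have hn₀ : n ≠ 0 := Nat.one_le_iff_ne_zero.mp hn
  refine Real.rpow_one_div_le_add_of_forall_le_pow hn₀ ENNReal.toReal_nonneg
    ENNReal.toReal_nonneg ENNReal.toReal_nonneg fun α β hα hβ h₁ h₂ => ?_
  refine ENNReal.toReal_le_of_le_ofReal (by positivity)
    (volume_sdiff_add_le_of_le_pow hn₀ hCclosed hCadd (fun x hx t ht => hCsmul x hx t ht.le)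
      hΓ₁closed hΓ₂closed hΓ₁cobdd hΓ₂cobdd hα hβ ?_ ?_)
  · exact (ENNReal.le_ofReal_iff_toReal_le hΓ₁cobdd.measure_lt_top.ne (by positivity)).mpr h₁
  · exact (ENNReal.le_ofReal_iff_toReal_le hΓ₂cobdd.measure_lt_top.ne (by positivity)).mpr h₂

/-- **Brunn–Minkowski inequality for covolumes** of cobounded `C`-convex regions:
`covol(Γ₁)^{1/n} + covol(Γ₂)^{1/n} ≥ covol(Γ₁ + Γ₂)^{1/n}`. -/
theorem brunn_minkowski_covolume
    (n : ℕ) (hn : 1 ≤ n) (C : Set (Fin n → ℝ))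
    (hCclosed : IsClosed C) (hCconvex : Convex ℝ C) (hC0 : (0 : Fin n → ℝ) ∈ C)
    (hCadd : ∀ x ∈ C, ∀ y ∈ C, x + y ∈ C)
    (hCsmul : ∀ x ∈ C, ∀ t : ℝ, 0 ≤ t → t • x ∈ C)
    (hCsalient : ∀ x ∈ C, -x ∈ C → x = 0)
    (hCfull : (interior C).Nonempty)
    (Γ₁ Γ₂ : Set (Fin n → ℝ))
    (hΓ₁closed : IsClosed Γ₁) (hΓ₁convex : Convex ℝ Γ₁) (hΓ₁sub : Γ₁ ⊆ C)
    (hΓ₁reg : Γ₁ + C ⊆ Γ₁) (hΓ₁cobdd : Bornology.IsBounded (C \ Γ₁))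
    (hΓ₂closed : IsClosed Γ₂) (hΓ₂convex : Convex ℝ Γ₂) (hΓ₂sub : Γ₂ ⊆ C)
    (hΓ₂reg : Γ₂ + C ⊆ Γ₂) (hΓ₂cobdd : Bornology.IsBounded (C \ Γ₂)) :
    (volume (C \ (Γ₁ + Γ₂))).toReal ^ ((1 : ℝ) / n) ≤
      (volume (C \ Γ₁)).toReal ^ ((1 : ℝ) / n) +
        (volume (C \ Γ₂)).toReal ^ ((1 : ℝ) / n) :=
  brunn_minkowski_covolume_general n hn C hCclosed hCadd hCsmul Γ₁ Γ₂ hΓ₁closed hΓ₁cobdd hΓ₂closed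
    hΓ₂cobdd
end

section
/- Let S ⊆ ℤⁿ be an additive subsemigroup containing 0 that generates ℤⁿ as a group, such that the closure C of the convex hull of S is a strongly convex cone. Let I• be a primary graded sequence of subsets in S and let Γ(I•) be the closure of the convex hull of ⋃_{k>0} {x/k : x ∈ I_k}. Then Γ = Γ(I•) is a C-convex region (i.e., Γ ⊆ C and for every x ∈ Γ one has x + C ⊆ Γ), and Γ is cobounded (i.e., C \ Γ is bounded). -/
open MeasureTheory Pointwise Filter

/-- The canonical embedding of `ℤⁿ` into `ℝⁿ`. -/
noncomputable def zToR {n : ℕ} (x : Fin n → ℤ) : Fin n → ℝ := fun i => (x i : ℝ)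

/-- The convex region `Γ(I•)` associated to a graded sequence of subsets `I•` of `ℤⁿ`:
the closure of the convex hull of `⋃_{k>0} {x/k : x ∈ I_k}`. -/
noncomputable def GammaSeq {n : ℕ} (I : ℕ → Set (Fin n → ℤ)) : Set (Fin n → ℝ) :=
  closure (convexHull ℝ (⋃ k : ℕ, ⋃ _ : 0 < k, (fun x => ((k : ℝ))⁻¹ • zToR x) '' I k))

/-!
`Γ ⊆ C` because every generator `x / k` with `x ∈ I_k ⊆ S` lies in the cone `C`.

For `x ∈ I_k` and `s ∈ S` with `ℓ s > 0`, primarity puts `x + kJs` into `I_k` once `J ℓ(s) ≥ t₀`,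
so `x/k + Js ∈ Γ`, and convexity gives `x/k + s ∈ Γ`. Since `Γ` is closed and convex, this
propagates from the generators of `Γ` and of `C` to `Γ + C ⊆ Γ`.

A point `p = ∑ wᵢ sᵢ` of `conv(S)` is the limit of `y_N / N` with `y_N = ∑ ⌊N wᵢ⌋ sᵢ ∈ S`. If
`ℓ p > t₀`, then eventually `ℓ(y_N) ≥ N t₀`, so `y_N ∈ I_N` by primarity and `p ∈ Γ`. Hence
`C \ Γ ⊆ C ∩ {ℓ ≤ t₀}`, which is bounded because `ℓ ≥ δ ‖·‖` on `C` for some `δ > 0`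
(compactness of the unit sphere).
-/

open Topology

theorem closedConvexHull_add_closedConvexHull_subset {𝕜 E : Type*} [Semiring 𝕜] [PartialOrder 𝕜]
    [AddCommGroup E] [Module 𝕜 E] [TopologicalSpace E] [ContinuousAdd E] {s t Γ : Set E}
    (hΓ : Convex 𝕜 Γ) (hΓc : IsClosed Γ) (hst : s + t ⊆ Γ) :
    closedConvexHull 𝕜 s + closedConvexHull 𝕜 t ⊆ Γ := by
  have hleft : ∀ y ∈ t, closedConvexHull 𝕜 s ⊆ (· + y) ⁻¹' Γ := fun y hy =>
    closedConvexHull_min (fun x hx => hst (Set.add_mem_add hx hy))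
      (hΓ.translate_preimage_left y) (hΓc.preimage (continuous_add_const y))
  have hright : ∀ x ∈ closedConvexHull 𝕜 s, closedConvexHull 𝕜 t ⊆ (x + ·) ⁻¹' Γ :=
    fun x hx => closedConvexHull_min (fun y hy => hleft y hy hx)
      (hΓ.translate_preimage_right x) (hΓc.preimage (continuous_const_add x))
  rintro _ ⟨x, hx, y, hy, rfl⟩
  exact hright x hx hy

theorem exists_tendsto_inv_smul_of_mem_convexHull {M E : Type*} [AddCommMonoid M]
    [AddCommGroup E] [Module ℝ E] [TopologicalSpace E] [ContinuousAdd E] [ContinuousSMul ℝ E]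
    (f : M →+ E) (S : AddSubmonoid M) {p : E} (hp : p ∈ convexHull ℝ (f '' S)) :
    ∃ m : ℕ → M, (∀ N, m N ∈ S) ∧
      Tendsto (fun N : ℕ => (N : ℝ)⁻¹ • f (m N)) atTop (𝓝 p) := by
  obtain ⟨ι, _, w, z, hw₀, -, hz, rfl⟩ := mem_convexHull_iff_exists_fintype.1 hp
  choose σ hσS hσ using hz
  refine ⟨fun N => ∑ i, ⌊w i * N⌋₊ • σ i, fun N => sum_mem fun i _ => nsmul_mem (hσS i) _, ?_⟩
  have hcoef : ∀ i, Tendsto (fun N : ℕ => (⌊w i * N⌋₊ : ℝ) / N) atTop (𝓝 (w i)) := fun i =>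
    (tendsto_nat_floor_mul_div_atTop (hw₀ i)).comp tendsto_natCast_atTop_atTop
  convert tendsto_finsetSum Finset.univ fun i _ => (hcoef i).smul_const (z i) using 1
  funext N
  simp [Finset.smul_sum, ← hσ, div_eq_inv_mul, mul_smul, ← Nat.cast_smul_eq_nsmul ℝ]

section Cone

variable {E : Type*} [NormedAddCommGroup E] [NormedSpace ℝ E] [FiniteDimensional ℝ E]
  {C : Set E} {ℓ : E →ₗ[ℝ] ℝ}

theorem exists_pos_mul_norm_le_of_pos_on_cone (hC : IsClosed C)
    (hcone : ∀ x ∈ C, ∀ t : ℝ, 0 ≤ t → t • x ∈ C) (hℓ : ∀ x ∈ C, x ≠ 0 → 0 < ℓ x) :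
    ∃ δ > 0, ∀ x ∈ C, δ * ‖x‖ ≤ ℓ x := by
  obtain ⟨δ, hδ, hmin⟩ := ((isCompact_sphere (0 : E) 1).inter_left hC).exists_forall_le'
    ℓ.continuous_of_finiteDimensional.continuousOn
    fun x hx => hℓ x hx.1 (ne_zero_of_mem_unit_sphere ⟨x, hx.2⟩)
  refine ⟨δ, hδ, fun x hx => ?_⟩
  rcases eq_or_ne x 0 with rfl | hx0
  · simp
  have hnorm : 0 < ‖x‖ := norm_pos_iff.2 hx0
  have h := hmin (‖x‖⁻¹ • x) ⟨hcone x hx _ (inv_nonneg.2 hnorm.le), by simp [norm_smul, hnorm.ne']⟩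
  rw [map_smul, smul_eq_mul, le_inv_mul_iff₀ hnorm] at h
  linarith

theorem isBounded_inter_setOf_le_of_pos_on_cone (hC : IsClosed C)
    (hcone : ∀ x ∈ C, ∀ t : ℝ, 0 ≤ t → t • x ∈ C) (hℓ : ∀ x ∈ C, x ≠ 0 → 0 < ℓ x) (t : ℝ) :
    Bornology.IsBounded (C ∩ {x | ℓ x ≤ t}) := by
  obtain ⟨δ, hδ, hbound⟩ := exists_pos_mul_norm_le_of_pos_on_cone hC hcone hℓ
  refine (Metric.isBounded_closedBall (x := (0 : E)) (r := t / δ)).subset fun x hx => ?_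
  rw [mem_closedBall_zero_iff, le_div_iff₀ hδ]
  linarith [hbound x hx.1, hx.2.out]

end Cone

section GammaSeq

variable {n : ℕ} {I : ℕ → Set (Fin n → ℤ)}

noncomputable def zToRAddHom (n : ℕ) : (Fin n → ℤ) →+ (Fin n → ℝ) :=
  AddMonoidHom.compLeft (Int.castAddHom ℝ) (Fin n)

theorem coe_zToRAddHom : ⇑(zToRAddHom n) = zToR := rfl

theorem zToR_add_nsmul (z s : Fin n → ℤ) (m : ℕ) :
    zToR (z + m • s) = zToR z + (m : ℝ) • zToR s := by
  rw [← coe_zToRAddHom, map_add, map_nsmul, Nat.cast_smul_eq_nsmul]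

theorem isClosed_gammaSeq : IsClosed (GammaSeq I) := isClosed_closure

theorem convex_gammaSeq : Convex ℝ (GammaSeq I) := (convex_convexHull ℝ _).closure

theorem inv_smul_zToR_mem_gammaSeq {k : ℕ} (hk : 0 < k) {z : Fin n → ℤ} (hz : z ∈ I k) :
    (k : ℝ)⁻¹ • zToR z ∈ GammaSeq I :=
  subset_closure (subset_convexHull ℝ _ (Set.mem_iUnion₂.2 ⟨k, hk, z, hz, rfl⟩))

theorem gammaSeq_subset {Γ : Set (Fin n → ℝ)} (hΓ : Convex ℝ Γ) (hΓc : IsClosed Γ)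
    (h : ∀ k, 0 < k → ∀ z ∈ I k, (k : ℝ)⁻¹ • zToR z ∈ Γ) : GammaSeq I ⊆ Γ := by
  refine closure_minimal (convexHull_min ?_ hΓ) hΓc
  simp only [Set.iUnion_subset_iff, Set.image_subset_iff]
  exact h

/-- Together with `I k ⊆ S` for `k > 0`, this is primarity of `I•` with constant `t₀`. -/
def SuperlevelSubset (S : Set (Fin n → ℤ)) (I : ℕ → Set (Fin n → ℤ)) (ℓ : (Fin n → ℝ) →ₗ[ℝ] ℝ)
    (t₀ : ℝ) : Prop :=
  ∀ k : ℕ, 0 < k → ∀ z ∈ S, (k : ℝ) * t₀ ≤ ℓ (zToR z) → z ∈ I k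

variable {S : AddSubmonoid (Fin n → ℤ)} {ℓ : (Fin n → ℝ) →ₗ[ℝ] ℝ} {t₀ : ℝ}

theorem inv_smul_zToR_add_mem_gammaSeq
    (hI : SuperlevelSubset S I ℓ t₀) {k : ℕ} (hk : 0 < k) {z : Fin n → ℤ} (hz : z ∈ I k)
    (hzS : z ∈ S) (hℓz : 0 ≤ ℓ (zToR z)) {s : Fin n → ℤ} (hs : s ∈ S) (hℓs : 0 < ℓ (zToR s)) :
    (k : ℝ)⁻¹ • zToR z + zToR s ∈ GammaSeq I := by
  obtain ⟨J, hJ⟩ := exists_nat_ge (t₀ / ℓ (zToR s))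
  have hJs : t₀ ≤ (J + 1 : ℝ) * ℓ (zToR s) := by
    rw [div_le_iff₀ hℓs] at hJ
    nlinarith
  have hw : z + (k * (J + 1)) • s ∈ I k := by
    refine hI k hk _ (add_mem hzS (nsmul_mem hs _)) ?_
    rw [zToR_add_nsmul, map_add, map_smul, smul_eq_mul]
    push_cast
    nlinarith
  have hJ_gen : (k : ℝ)⁻¹ • zToR z + ((J + 1 : ℝ) • zToR s) ∈ GammaSeq I := by
    convert inv_smul_zToR_mem_gammaSeq hk hw using 1
    rw [zToR_add_nsmul, smul_add, smul_smul]
    push_cast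
    field_simp
  have hJ1 : (1 : ℝ) ≤ J + 1 := le_add_of_nonneg_left J.cast_nonneg
  have hseg := convex_gammaSeq.add_smul_mem (inv_smul_zToR_mem_gammaSeq hk hz) hJ_gen
    (t := (J + 1 : ℝ)⁻¹) ⟨by positivity, inv_le_one_of_one_le₀ hJ1⟩
  rwa [smul_smul, inv_mul_cancel₀ (by positivity), one_smul] at hseg

theorem gammaSeq_add_closedConvexHull_subset
    (hI : SuperlevelSubset S I ℓ t₀)
    (hIS : ∀ k : ℕ, 0 < k → I k ⊆ S) (hℓS : ∀ s ∈ S, 0 ≤ ℓ (zToR s))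
    (hℓS₀ : ∀ s ∈ S, ℓ (zToR s) = 0 → zToR s = 0) :
    GammaSeq I + closedConvexHull ℝ (zToR '' S) ⊆ GammaSeq I := by
  nth_rw 1 [GammaSeq, ← closedConvexHull_eq_closure_convexHull]
  refine closedConvexHull_add_closedConvexHull_subset convex_gammaSeq isClosed_gammaSeq ?_
  rintro _ ⟨_, hu, _, ⟨s, hs, rfl⟩, rfl⟩
  obtain ⟨k, hk, z, hz, rfl⟩ := Set.mem_iUnion₂.1 hu
  rcases (hℓS s hs).lt_or_eq with hℓs | hℓs
  · exact inv_smul_zToR_add_mem_gammaSeq hI hk hz (hIS k hk hz) (hℓS z (hIS k hk hz)) hs hℓs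
  · simpa [hℓS₀ s hs hℓs.symm] using inv_smul_zToR_mem_gammaSeq hk hz

theorem mem_gammaSeq_of_mem_convexHull
    (hI : SuperlevelSubset S I ℓ t₀) {p : Fin n → ℝ}
    (hp : p ∈ convexHull ℝ (zToR '' S)) (hℓp : t₀ < ℓ p) : p ∈ GammaSeq I := by
  obtain ⟨m, hmS, hm⟩ := exists_tendsto_inv_smul_of_mem_convexHull (zToRAddHom n) S hp
  have hℓm := (ℓ.continuous_of_finiteDimensional.tendsto p).comp hm
  refine isClosed_gammaSeq.mem_of_tendsto hm ?_
  filter_upwards [hℓm.eventually (eventually_gt_nhds hℓp), eventually_gt_atTop 0] with N hN hN0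
  refine inv_smul_zToR_mem_gammaSeq hN0 (hI N hN0 _ (hmS N) ?_)
  have hN' : (0 : ℝ) < N := Nat.cast_pos.2 hN0
  simp only [Function.comp_apply, coe_zToRAddHom, map_smul, smul_eq_mul] at hN
  rw [lt_inv_mul_iff₀ hN'] at hN
  exact hN.le

theorem mem_gammaSeq_of_mem_closure_convexHull
    (hI : SuperlevelSubset S I ℓ t₀) {p : Fin n → ℝ}
    (hp : p ∈ closure (convexHull ℝ (zToR '' S))) (hℓp : t₀ < ℓ p) : p ∈ GammaSeq I := by
  have hopen : IsOpen {x | t₀ < ℓ x} := isOpen_lt continuous_const ℓ.continuous_of_finiteDimensional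
  exact closure_minimal (fun x hx => mem_gammaSeq_of_mem_convexHull hI hx.2 hx.1) isClosed_gammaSeq
    (hopen.inter_closure ⟨hℓp, hp⟩)

end GammaSeq

theorem gammaSeq_is_cobounded_convex_region_general
    (n : ℕ) (S : Set (Fin n → ℤ)) (hS0 : (0 : Fin n → ℤ) ∈ S)
    (hSadd : ∀ a ∈ S, ∀ b ∈ S, a + b ∈ S)
    (C : Set (Fin n → ℝ)) (hC : C = closure (convexHull ℝ (zToR '' S)))
    (hCcone : ∀ x ∈ C, ∀ t : ℝ, 0 ≤ t → t • x ∈ C)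
    (ℓ : (Fin n → ℝ) →ₗ[ℝ] ℝ)
    (hℓnonneg : ∀ x ∈ C, 0 ≤ ℓ x) (hℓker : ∀ x ∈ C, ℓ x = 0 → x = 0)
    (I : ℕ → Set (Fin n → ℤ))
    (hIsub : ∀ k : ℕ, 0 < k → I k ⊆ S)
    (t₀ : ℝ)
    (hprim : ∀ k : ℕ, 0 < k →
      {x ∈ I k | (k : ℝ) * t₀ ≤ ℓ (zToR x)} = {x ∈ S | (k : ℝ) * t₀ ≤ ℓ (zToR x)})
    (Γ : Set (Fin n → ℝ)) (hΓ : Γ = GammaSeq I) :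
    Γ ⊆ C ∧ (∀ x ∈ Γ, ∀ y ∈ C, x + y ∈ Γ) ∧ Bornology.IsBounded (C \ Γ) := by
  let M : AddSubmonoid (Fin n → ℤ) := ⟨⟨S, fun {a b} ha hb => hSadd a ha b hb⟩, hS0⟩
  have hI : SuperlevelSubset M I ℓ t₀ :=
    fun k hk z hz hℓz => (Set.ext_iff.1 (hprim k hk) z).2 ⟨hz, hℓz⟩ |>.1
  have hSC : ∀ s ∈ S, zToR s ∈ C := fun s hs =>
    hC ▸ subset_closure (subset_convexHull ℝ _ ⟨s, hs, rfl⟩)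
  have hCc : IsClosed C := hC ▸ isClosed_closure
  have hℓpos : ∀ x ∈ C, x ≠ 0 → 0 < ℓ x := fun x hx hx0 =>
    (hℓnonneg x hx).lt_of_ne' fun h => hx0 (hℓker x hx h)
  subst hΓ
  refine ⟨gammaSeq_subset (hC ▸ (convex_convexHull ℝ _).closure) hCc
    fun k hk z hz => hCcone _ (hSC z (hIsub k hk hz)) _ (by positivity), fun x hx y hy => ?_, ?_⟩
  · rw [hC, ← closedConvexHull_eq_closure_convexHull] at hy
    exact gammaSeq_add_closedConvexHull_subset (S := M) hI hIsub
      (fun s hs => hℓnonneg _ (hSC s hs)) (fun s hs => hℓker _ (hSC s hs)) (Set.add_mem_add hx hy)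
  · refine (isBounded_inter_setOf_le_of_pos_on_cone hCc hCcone hℓpos t₀).subset
      fun x ⟨hxC, hxΓ⟩ => ⟨hxC, Set.mem_ofPred.2 <| le_of_not_gt fun hlt => hxΓ ?_⟩
    exact mem_gammaSeq_of_mem_closure_convexHull (S := M) hI (hC ▸ hxC) hlt

/-- For a primary graded sequence `I•` of subsets in a semigroup `S ⊆ ℤⁿ` whose associated
cone `C` is strongly convex, `Γ(I•)` is a cobounded `C`-convex region. -/
theorem gammaSeq_is_cobounded_convex_region
    (n : ℕ) (S : Set (Fin n → ℤ)) (hS0 : (0 : Fin n → ℤ) ∈ S)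
    (hSadd : ∀ a ∈ S, ∀ b ∈ S, a + b ∈ S)
    (hSgen : AddSubgroup.closure S = (⊤ : AddSubgroup (Fin n → ℤ)))
    (C : Set (Fin n → ℝ)) (hC : C = closure (convexHull ℝ (zToR '' S)))
    (hCcone : ∀ x ∈ C, ∀ t : ℝ, 0 ≤ t → t • x ∈ C)
    (hCsalient : ∀ x ∈ C, -x ∈ C → x = 0)
    (ℓ : (Fin n → ℝ) →ₗ[ℝ] ℝ)
    (hℓnonneg : ∀ x ∈ C, 0 ≤ ℓ x) (hℓker : ∀ x ∈ C, ℓ x = 0 → x = 0)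
    (I : ℕ → Set (Fin n → ℤ))
    (hIsub : ∀ k : ℕ, 0 < k → I k ⊆ S)
    (hIne : ∀ k : ℕ, 0 < k → (I k).Nonempty)
    (hIgr : ∀ k m : ℕ, 0 < k → 0 < m → I k + I m ⊆ I (k + m))
    (t₀ : ℝ) (ht₀ : 0 < t₀)
    (hprim : ∀ k : ℕ, 0 < k →
      {x ∈ I k | (k : ℝ) * t₀ ≤ ℓ (zToR x)} = {x ∈ S | (k : ℝ) * t₀ ≤ ℓ (zToR x)})
    (Γ : Set (Fin n → ℝ)) (hΓ : Γ = GammaSeq I) :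
    Γ ⊆ C ∧ (∀ x ∈ Γ, ∀ y ∈ C, x + y ∈ Γ) ∧ Bornology.IsBounded (C \ Γ) :=
  gammaSeq_is_cobounded_convex_region_general n S hS0 hSadd C hC hCcone ℓ hℓnonneg hℓker I hIsub t₀
    hprim Γ hΓ
end

section
/- Let S ⊆ ℤⁿ be an additive subsemigroup containing 0 that generates ℤⁿ as a group, such that the closure C of the convex hull of S is a strongly convex cone. Let I'• and I''• be primary graded sequences of subsets in S, and let I'• + I''• be the graded sequence defined by (I'• + I''•)_k = I'_k + I''_k (sumset). Then Γ(I'•) + Γ(I''•) = Γ(I'• + I''•), where the left side is a Minkowski sum. -/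
open MeasureTheory Pointwise Filter Topology

lemma zToR_add' {n : ℕ} (x y : Fin n → ℤ) : zToR (x + y) = zToR x + zToR y := by
  funext i; simp [zToR]

lemma zToR_nsmul' {n : ℕ} (m : ℕ) (x : Fin n → ℤ) : zToR (m • x) = (m : ℝ) • zToR x := by
  funext i; simp [zToR]

/-- Iterated grading: `m • x ∈ I (m * k)` for `x ∈ I k`. -/
lemma smul_mem_graded' {n : ℕ} (I : ℕ → Set (Fin n → ℤ))
    (hgr : ∀ k m : ℕ, 0 < k → 0 < m → I k + I m ⊆ I (k + m)) :
    ∀ m k : ℕ, ∀ x, 0 < m → 0 < k → x ∈ I k → m • x ∈ I (m * k) := by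
  intro m
  induction m with
  | zero => intro k x hm; exact absurd hm (by omega)
  | succ m ih =>
    intro k x _ hk hx
    rcases Nat.eq_zero_or_pos m with hm | hm
    · subst hm; simpa using hx
    · have h1 : m • x ∈ I (m * k) := ih k x hm hk hx
      have h2 : m • x + x ∈ I (m * k + k) :=
        hgr _ _ (Nat.mul_pos hm hk) hk (Set.add_mem_add h1 hx)
      have e : (m + 1) * k = m * k + k := by ring
      rw [e, succ_nsmul]
      exact h2

/-- The sum of two closed subsets of a pointed cone in `ℝⁿ` is closed. -/
lemma isClosed_add_of_cone' {n : ℕ} (A B : Set (Fin n → ℝ))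
    (ℓ : (Fin n → ℝ) →ₗ[ℝ] ℝ) (c : ℝ) (hc : 0 < c)
    (hA : IsClosed A) (hB : IsClosed B)
    (hAb : ∀ x ∈ A, c * ‖x‖ ≤ ℓ x) (hBn : ∀ x ∈ B, 0 ≤ ℓ x) :
    IsClosed (A + B) := by
  have hℓc : Continuous ℓ := ℓ.continuous_of_finiteDimensional
  apply IsSeqClosed.isClosed
  intro w p hw hwp
  have h : ∀ i, ∃ a ∈ A, ∃ b ∈ B, a + b = w i := fun i => Set.mem_add.mp (hw i)
  choose a ha b hb hab using h
  have hwl : Tendsto (fun i => ℓ (w i)) atTop (𝓝 (ℓ p)) :=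
    (hℓc.tendsto p).comp hwp
  obtain ⟨M, hM⟩ := hwl.bddAbove_range
  have hMle : ∀ i, ℓ (w i) ≤ M := fun i => hM ⟨i, rfl⟩
  have hball : ∀ i, a i ∈ Metric.closedBall (0 : Fin n → ℝ) (M / c) := by
    intro i
    have h1 : c * ‖a i‖ ≤ ℓ (a i) := hAb _ (ha i)
    have h2 : ℓ (a i) ≤ ℓ (w i) := by
      have := hBn _ (hb i)
      have he : ℓ (w i) = ℓ (a i) + ℓ (b i) := by rw [← hab i, map_add]
      linarith
    have : ‖a i‖ ≤ M / c := by
      rw [le_div_iff₀ hc]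
      have := hMle i
      nlinarith
    simpa [Metric.mem_closedBall, dist_eq_norm] using this
  obtain ⟨α, _, φ, hφ, hconv⟩ :=
    (isCompact_closedBall (0 : Fin n → ℝ) (M / c)).tendsto_subseq hball
  have hαA : α ∈ A :=
    hA.mem_of_tendsto hconv (Filter.Eventually.of_forall fun i => ha (φ i))
  have hbconv : Tendsto (fun i => b (φ i)) atTop (𝓝 (p - α)) := by
    have : (fun i => b (φ i)) = fun i => w (φ i) - a (φ i) := by
      funext i; rw [← hab (φ i)]; abel
    rw [this]
    exact (hwp.comp hφ.tendsto_atTop).sub hconv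
  have hβB : p - α ∈ B :=
    hB.mem_of_tendsto hbconv (Filter.Eventually.of_forall fun i => hb (φ i))
  exact Set.mem_add.mpr ⟨α, hαA, p - α, hβB, by abel⟩

/-- **Additivity of `Γ`**: for primary graded sequences `I'•`, `I''•` in `S`,
`Γ(I'•) + Γ(I''•) = Γ(I'• + I''•)` (Minkowski sum on the left, termwise sumsets on the
right). -/
theorem gammaSeq_add
    (n : ℕ) (S : Set (Fin n → ℤ)) (hS0 : (0 : Fin n → ℤ) ∈ S)
    (hSadd : ∀ a ∈ S, ∀ b ∈ S, a + b ∈ S)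
    (hSgen : AddSubgroup.closure S = (⊤ : AddSubgroup (Fin n → ℤ)))
    (C : Set (Fin n → ℝ)) (hC : C = closure (convexHull ℝ (zToR '' S)))
    (hCcone : ∀ x ∈ C, ∀ t : ℝ, 0 ≤ t → t • x ∈ C)
    (hCsalient : ∀ x ∈ C, -x ∈ C → x = 0)
    (ℓ : (Fin n → ℝ) →ₗ[ℝ] ℝ)
    (hℓnonneg : ∀ x ∈ C, 0 ≤ ℓ x) (hℓker : ∀ x ∈ C, ℓ x = 0 → x = 0)
    (I' I'' : ℕ → Set (Fin n → ℤ))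
    (hI'sub : ∀ k : ℕ, 0 < k → I' k ⊆ S) (hI''sub : ∀ k : ℕ, 0 < k → I'' k ⊆ S)
    (hI'ne : ∀ k : ℕ, 0 < k → (I' k).Nonempty) (hI''ne : ∀ k : ℕ, 0 < k → (I'' k).Nonempty)
    (hI'gr : ∀ k m : ℕ, 0 < k → 0 < m → I' k + I' m ⊆ I' (k + m))
    (hI''gr : ∀ k m : ℕ, 0 < k → 0 < m → I'' k + I'' m ⊆ I'' (k + m))
    (t₀' : ℝ) (ht₀' : 0 < t₀')
    (hprim' : ∀ k : ℕ, 0 < k →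
      {x ∈ I' k | (k : ℝ) * t₀' ≤ ℓ (zToR x)} = {x ∈ S | (k : ℝ) * t₀' ≤ ℓ (zToR x)})
    (t₀'' : ℝ) (ht₀'' : 0 < t₀'')
    (hprim'' : ∀ k : ℕ, 0 < k →
      {x ∈ I'' k | (k : ℝ) * t₀'' ≤ ℓ (zToR x)} = {x ∈ S | (k : ℝ) * t₀'' ≤ ℓ (zToR x)}) :
    GammaSeq I' + GammaSeq I'' = GammaSeq (fun k => I' k + I'' k) := by
  classical
  -- basic properties of C
  have hCclosed : IsClosed C := by rw [hC]; exact isClosed_closure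
  have hCconvex : Convex ℝ C := by rw [hC]; exact (convex_convexHull ℝ _).closure
  have hSC : ∀ x ∈ S, zToR x ∈ C := by
    intro x hx
    rw [hC]
    exact subset_closure (subset_convexHull ℝ _ ⟨x, hx, rfl⟩)
  -- the generating sets
  set U1 : Set (Fin n → ℝ) :=
    ⋃ k : ℕ, ⋃ _ : 0 < k, (fun x => ((k : ℝ))⁻¹ • zToR x) '' I' k with hU1
  set U2 : Set (Fin n → ℝ) :=
    ⋃ k : ℕ, ⋃ _ : 0 < k, (fun x => ((k : ℝ))⁻¹ • zToR x) '' I'' k with hU2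
  set U3 : Set (Fin n → ℝ) :=
    ⋃ k : ℕ, ⋃ _ : 0 < k, (fun x => ((k : ℝ))⁻¹ • zToR x) '' (I' k + I'' k) with hU3
  -- U1, U2 live in C
  have hUC : ∀ (I : ℕ → Set (Fin n → ℤ)), (∀ k, 0 < k → I k ⊆ S) →
      (⋃ k : ℕ, ⋃ _ : 0 < k, (fun x => ((k : ℝ))⁻¹ • zToR x) '' I k) ⊆ C := by
    intro I hsub z hz
    simp only [Set.mem_iUnion] at hz
    obtain ⟨k, hk, x, hx, rfl⟩ := hz
    exact hCcone _ (hSC x (hsub k hk hx)) _ (by positivity)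
  have hU1C : U1 ⊆ C := hUC I' hI'sub
  have hU2C : U2 ⊆ C := hUC I'' hI''sub
  -- the key combinatorial identity: U1 + U2 = U3
  have h12 : U1 + U2 = U3 := by
    apply Set.Subset.antisymm
    · rintro p hp
      obtain ⟨u, hu, v, hv, rfl⟩ := Set.mem_add.mp hp
      simp only [hU1, hU2, Set.mem_iUnion] at hu hv
      obtain ⟨k, hk, x, hx, rfl⟩ := hu
      obtain ⟨m, hm, y, hy, rfl⟩ := hv
      have hx' : m • x ∈ I' (k * m) := by
        have := smul_mem_graded' I' hI'gr m k x hm hk hx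
        rwa [Nat.mul_comm] at this
      have hy' : k • y ∈ I'' (k * m) := smul_mem_graded' I'' hI''gr k m y hk hm hy
      have hmem : m • x + k • y ∈ I' (k * m) + I'' (k * m) := Set.add_mem_add hx' hy'
      simp only [hU3, Set.mem_iUnion]
      refine ⟨k * m, Nat.mul_pos hk hm, m • x + k • y, hmem, ?_⟩
      have hk0 : ((k : ℝ)) ≠ 0 := by positivity
      have hm0 : ((m : ℝ)) ≠ 0 := by positivity
      show ((↑(k * m) : ℝ))⁻¹ • zToR (m • x + k • y) = (↑k : ℝ)⁻¹ • zToR x + (↑m : ℝ)⁻¹ • zToR y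
      rw [zToR_add', zToR_nsmul', zToR_nsmul', smul_add, smul_smul, smul_smul]
      congr 1
      · congr 1
        push_cast
        field_simp
        try ring
      · congr 1
        push_cast
        field_simp
        try ring
    · rintro p hp
      simp only [hU3, Set.mem_iUnion] at hp
      obtain ⟨k, hk, z, hz, rfl⟩ := hp
      obtain ⟨x, hx, y, hy, rfl⟩ := Set.mem_add.mp hz
      show (↑k : ℝ)⁻¹ • zToR (x + y) ∈ U1 + U2
      rw [zToR_add', smul_add]
      refine Set.add_mem_add ?_ ?_
      · simp only [hU1, Set.mem_iUnion]
        exact ⟨k, hk, x, hx, rfl⟩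
      · simp only [hU2, Set.mem_iUnion]
        exact ⟨k, hk, y, hy, rfl⟩
  -- a norm bound on C
  obtain ⟨c, hc0, hcb⟩ : ∃ c > (0 : ℝ), ∀ x ∈ C, c * ‖x‖ ≤ ℓ x := by
    by_cases hK : (C ∩ Metric.sphere (0 : Fin n → ℝ) 1).Nonempty
    · have hKcomp : IsCompact (C ∩ Metric.sphere (0 : Fin n → ℝ) 1) :=
        (isCompact_sphere (0 : Fin n → ℝ) 1).inter_left hCclosed
      obtain ⟨x₀, hx₀, hmin⟩ :=
        hKcomp.exists_isMinOn hK (ℓ.continuous_of_finiteDimensional.continuousOn)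
      have hx₀C := hx₀.1
      have hx₀n : ‖x₀‖ = 1 := mem_sphere_zero_iff_norm.mp hx₀.2
      refine ⟨ℓ x₀, ?_, ?_⟩
      · rcases lt_or_eq_of_le (hℓnonneg _ hx₀C) with h | h
        · exact h
        · exfalso
          have := hℓker _ hx₀C h.symm
          rw [this] at hx₀n; simp at hx₀n
      · intro x hx
        rcases eq_or_ne x 0 with rfl | hx0
        · simp
        · have hnx : (0 : ℝ) < ‖x‖ := norm_pos_iff.mpr hx0
          have hu : ‖x‖⁻¹ • x ∈ C ∩ Metric.sphere (0 : Fin n → ℝ) 1 := by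
            refine ⟨hCcone x hx _ (inv_nonneg.mpr hnx.le), ?_⟩
            rw [mem_sphere_zero_iff_norm, norm_smul, norm_inv, norm_norm,
              inv_mul_cancel₀ hnx.ne']
          have h1 : ℓ x₀ ≤ ℓ (‖x‖⁻¹ • x) := hmin hu
          rw [ℓ.map_smul, smul_eq_mul] at h1
          have h2 := mul_le_mul_of_nonneg_right h1 hnx.le
          have h3 : ‖x‖⁻¹ * ℓ x * ‖x‖ = ℓ x := by field_simp
          linarith
    · refine ⟨1, one_pos, ?_⟩
      intro x hx
      rcases eq_or_ne x 0 with rfl | hx0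
      · simp
      · exfalso
        have hnx : (0 : ℝ) < ‖x‖ := norm_pos_iff.mpr hx0
        exact hK ⟨‖x‖⁻¹ • x, hCcone x hx _ (inv_nonneg.mpr hnx.le), by
          rw [mem_sphere_zero_iff_norm, norm_smul, norm_inv, norm_norm,
            inv_mul_cancel₀ hnx.ne']⟩
  -- the convex hulls and their closures live in C
  have hA1C : closure (convexHull ℝ U1) ⊆ C :=
    closure_minimal (convexHull_min hU1C hCconvex) hCclosed
  have hA2C : closure (convexHull ℝ U2) ⊆ C :=
    closure_minimal (convexHull_min hU2C hCconvex) hCclosed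
  -- Γ(I') + Γ(I'') is closed
  have hclosed : IsClosed (closure (convexHull ℝ U1) + closure (convexHull ℝ U2)) :=
    isClosed_add_of_cone' _ _ ℓ c hc0 isClosed_closure isClosed_closure
      (fun x hx => hcb x (hA1C hx)) (fun x hx => hℓnonneg x (hA2C hx))
  -- conclude
  show closure (convexHull ℝ U1) + closure (convexHull ℝ U2) = closure (convexHull ℝ U3)
  rw [← h12, convexHull_add]
  apply Set.Subset.antisymm
  · intro z hz
    obtain ⟨a, ha, b, hb, rfl⟩ := Set.mem_add.mp hz
    exact map_mem_closure₂ continuous_add ha hb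
      (fun x hx y hy => Set.add_mem_add hx hy)
  · exact closure_minimal (Set.add_subset_add subset_closure subset_closure) hclosed
end

section
/- Let k be a field, R an n-dimensional Noetherian local domain with maximal ideal 𝔪 which is a k-algebra with k → R/𝔪 an isomorphism, and let v: R∖{0} → ℤⁿ be a good valuation on R with value semigroup S = v(R∖{0}) ∪ {0}, linear function ℓ and constant r₀ as in the definition of good valuation. Let 𝔞• = (𝔞₁, 𝔞₂, …) be an 𝔪-primary graded sequence of k-subspaces of R, and define I(𝔞•)_k = {v(f) : 0 ≠ f ∈ 𝔞_k}. Then I(𝔞•) is a primary graded sequence of subsets in S: I(𝔞•)_k + I(𝔞•)_m ⊆ I(𝔞•)_{k+m} for all k, m > 0, and there exists t₀ > 0 such that for every k > 0, I(𝔞•)_k ∩ {x : ℓ(x) ≥ kt₀} = S ∩ {x : ℓ(x) ≥ kt₀}. -/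
open Filter

/-- **The sequence of value sets of an `𝔪`-primary graded sequence of subspaces is a
primary graded sequence in the value semigroup**: for a good valuation `v` on `R` and an
`𝔪`-primary graded sequence `𝔞•` of `k`-subspaces, the sets `I(𝔞•)_k = v(𝔞_k ∖ {0})`
form a graded sequence in `S` which is primary. -/
theorem value_sets_of_primary_graded_sequence_are_primary
    (n : ℕ) (K : Type) [Field K] (R : Type) [CommRing R] [IsDomain R]
    [IsNoetherianRing R] [IsLocalRing R] [Algebra K R]
    (hdim : ringKrullDim R = n)
    (hres : Function.Bijective
      ((Ideal.Quotient.mk (IsLocalRing.maximalIdeal R)).comp (algebraMap K R)))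
    (ord : LinearOrder (Fin n → ℤ))
    (hord : ∀ a b c : Fin n → ℤ, ord.le a b → ord.le (a + c) (b + c))
    (v : R → Fin n → ℤ)
    (hv1 : ∀ f g : R, f ≠ 0 → g ≠ 0 → v (f * g) = v f + v g)
    (hv2 : ∀ f g : R, f ≠ 0 → g ≠ 0 → f + g ≠ 0 →
      ord.le (ord.min (v f) (v g)) (v (f + g)))
    (hv3 : ∀ c : K, c ≠ 0 → v (algebraMap K R c) = 0)
    (hv4 : ∀ f g : R, f ≠ 0 → g ≠ 0 → v f = v g → ∃ c : K, c ≠ 0 ∧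
      (g + algebraMap K R c * f = 0 ∨ ord.lt (v g) (v (g + algebraMap K R c * f))))
    (S : Set (Fin n → ℤ)) (hS : S = v '' {f : R | f ≠ 0} ∪ {0})
    (C : Set (Fin n → ℝ)) (hC : C = closure (convexHull ℝ (zToR '' S)))
    (hCsalient : ∀ x ∈ C, -x ∈ C → x = 0)
    (ℓ : (Fin n → ℝ) →ₗ[ℝ] ℝ)
    (hℓnonneg : ∀ x ∈ C, 0 ≤ ℓ x) (hℓker : ∀ x ∈ C, ℓ x = 0 → x = 0)
    (r₀ : ℝ) (hr₀ : 0 < r₀)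
    (hgood : ∀ f : R, f ≠ 0 → ∀ k : ℕ, 0 < k →
      (k : ℝ) * r₀ ≤ ℓ (zToR (v f)) → f ∈ IsLocalRing.maximalIdeal R ^ k)
    (a : ℕ → Submodule K R)
    (hamul : ∀ k m : ℕ, 0 < k → 0 < m → ∀ f ∈ a k, ∀ g ∈ a m, f * g ∈ a (k + m))
    (t : ℕ) (ht : 0 < t)
    (haprim : ∀ f ∈ IsLocalRing.maximalIdeal R ^ t, f ∈ a 1)
    (I : ℕ → Set (Fin n → ℤ))
    (hI : ∀ k : ℕ, I k = v '' {f : R | f ≠ 0 ∧ f ∈ a k}) :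
    (∀ k m : ℕ, 0 < k → 0 < m → ∀ x ∈ I k, ∀ y ∈ I m, x + y ∈ I (k + m)) ∧
    ∃ t₀ : ℝ, 0 < t₀ ∧ ∀ k : ℕ, 0 < k →
      {x ∈ I k | (k : ℝ) * t₀ ≤ ℓ (zToR x)} = {x ∈ S | (k : ℝ) * t₀ ≤ ℓ (zToR x)} := by
  constructor
  · intro k m hk hm x hx y hy
    rw [hI] at hx hy ⊢
    obtain ⟨f, ⟨hf0, hfa⟩, rfl⟩ := hx
    obtain ⟨g, ⟨hg0, hga⟩, rfl⟩ := hy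
    exact ⟨f * g, ⟨mul_ne_zero hf0 hg0, hamul k m hk hm f hfa g hga⟩,
      hv1 f g hf0 hg0⟩
  · -- key: 𝔪^(k*t) ⊆ a k for k > 0
    have key : ∀ k : ℕ, 0 < k → ∀ f ∈ IsLocalRing.maximalIdeal R ^ (k * t), f ∈ a k := by
      intro k
      induction k with
      | zero => intro h; exact absurd h (lt_irrefl 0)
      | succ k ih =>
        intro _ f hf
        rcases Nat.eq_zero_or_pos k with hk0 | hk0
        · subst hk0; simpa using haprim f (by simpa using hf)
        · rw [Nat.succ_mul, pow_add] at hf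
          refine Submodule.mul_induction_on hf (fun m hm g hg => ?_) (fun x y hx hy => (a (k+1)).add_mem hx hy)
          exact hamul k 1 hk0 one_pos m (ih hk0 m hm) g (haprim g hg)
    refine ⟨t * r₀, by positivity, fun k hk => ?_⟩
    ext x
    simp only [Set.mem_setOf_eq]
    constructor
    · rintro ⟨hx, hℓx⟩
      rw [hI] at hx
      obtain ⟨f, ⟨hf0, _⟩, rfl⟩ := hx
      exact ⟨by rw [hS]; exact Or.inl ⟨f, hf0, rfl⟩, hℓx⟩
    · rintro ⟨hx, hℓx⟩
      refine ⟨?_, hℓx⟩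
      rw [hS] at hx
      have hpos : (0:ℝ) < (k:ℝ) * ((t:ℝ) * r₀) := by
        have : (0:ℝ) < (k:ℝ) := by exact_mod_cast hk
        positivity
      rcases hx with ⟨f, hf0, rfl⟩ | hx0
      · have hfm : f ∈ IsLocalRing.maximalIdeal R ^ (k * t) := by
          apply hgood f hf0 (k * t) (Nat.mul_pos hk ht)
          calc ((k * t : ℕ) : ℝ) * r₀ = (k:ℝ) * ((t:ℝ) * r₀) := by push_cast; ring
            _ ≤ ℓ (zToR (v f)) := hℓx
        rw [hI]
        exact ⟨f, ⟨hf0, key k hk f hfm⟩, rfl⟩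
      · exfalso
        have : ℓ (zToR x) = 0 := by
          have : x = 0 := hx0
          subst this
          have : zToR (0 : Fin n → ℤ) = 0 := by funext i; simp [zToR]
          rw [this, map_zero]
        linarith
end

section
/- Let k be a field, R an n-dimensional Noetherian local domain with maximal ideal 𝔪 which is a k-algebra with k → R/𝔪 an isomorphism, and let v: R∖{0} → ℤⁿ be a good valuation on R with value semigroup S = v(R∖{0}) ∪ {0}. Let 𝔞 ⊆ R be an 𝔪-primary k-subspace and let I(𝔞) = {v(f) : 0 ≠ f ∈ 𝔞}. Then S ∖ I(𝔞) is finite and dim_k(R/𝔞) = #(S ∖ I(𝔞)). -/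
open Module

structure IsValuationWithOneDimLeaves (K : Type*) {R α : Type*} [Field K] [CommRing R]
    [Algebra K R] [LinearOrder α] [AddZeroClass α] (v : R → α) : Prop where
  map_mul {f g : R} : f ≠ 0 → g ≠ 0 → v (f * g) = v f + v g
  min_le_map_add {f g : R} : f ≠ 0 → g ≠ 0 → f + g ≠ 0 → min (v f) (v g) ≤ v (f + g)
  map_algebraMap {c : K} : c ≠ 0 → v (algebraMap K R c) = 0
  oneDimLeaves {f g : R} : f ≠ 0 → g ≠ 0 → v f = v g → ∃ c : K, c ≠ 0 ∧
    (g + algebraMap K R c * f = 0 ∨ v g < v (g + algebraMap K R c * f))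

namespace IsValuationWithOneDimLeaves

variable {K R α : Type*} [Field K] [CommRing R] [Algebra K R] [LinearOrder α] [AddZeroClass α]
  {v : R → α} (hv : IsValuationWithOneDimLeaves K v)
include hv

theorem map_one : v 1 = 0 := by
  simpa using hv.map_algebraMap (one_ne_zero (α := K))

theorem map_smul [Nontrivial R] {c : K} {f : R} (hc : c ≠ 0) (hf : f ≠ 0) : v (c • f) = v f := by
  rw [Algebra.smul_def, hv.map_mul ((map_ne_zero _).2 hc) hf, hv.map_algebraMap hc, zero_add]

theorem map_neg [Nontrivial R] {f : R} (hf : f ≠ 0) : v (-f) = v f := by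
  simpa using hv.map_smul (neg_ne_zero.2 (one_ne_zero (α := K))) hf

theorem add_ne_zero_and_map_add_of_lt [Nontrivial R] {f g : R} (hf : f ≠ 0) (hg : g ≠ 0)
    (hfg : v f < v g) : f + g ≠ 0 ∧ v (f + g) = v f := by
  have hsum : f + g ≠ 0 := by
    rintro h
    rw [eq_neg_of_add_eq_zero_right h, hv.map_neg hf] at hfg
    exact hfg.false
  refine ⟨hsum, le_antisymm ?_ (by simpa [hfg.le] using hv.min_le_map_add hf hg hsum)⟩
  -- `f = (f + g) + (-g)` with `v (-g) = v g > v f`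
  have := hv.min_le_map_add hsum (neg_ne_zero.2 hg) (by simpa using hf)
  rw [add_neg_cancel_right, hv.map_neg hg, min_le_iff] at this
  exact this.resolve_right hfg.not_ge

theorem add_ne_zero_and_map_add_of_ne [Nontrivial R] {f g : R} (hf : f ≠ 0) (hg : g ≠ 0)
    (hfg : v f ≠ v g) : f + g ≠ 0 ∧ v (f + g) = min (v f) (v g) := by
  rcases hfg.lt_or_gt with h | h
  · simpa [h.le] using hv.add_ne_zero_and_map_add_of_lt hf hg h
  · simpa [add_comm f, h.le] using hv.add_ne_zero_and_map_add_of_lt hg hf h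

theorem sum_ne_zero_and_exists_map_sum_eq [Nontrivial R] {ι : Type*} {s : Finset ι}
    (hs : s.Nonempty) {w : ι → R} (hw : ∀ i ∈ s, w i ≠ 0) (hinj : Set.InjOn (v ∘ w) s) :
    ∑ i ∈ s, w i ≠ 0 ∧ ∃ i ∈ s, v (∑ i ∈ s, w i) = v (w i) := by
  induction hs using Finset.Nonempty.cons_induction with
  | singleton a => simpa using hw a (by simp)
  | cons a s ha hs ih =>
    simp only [Finset.mem_cons, forall_eq_or_imp, Finset.coe_cons] at hw hinj ⊢
    obtain ⟨hsum, j, hj, hvj⟩ := ih hw.2 (hinj.mono (Set.subset_insert _ _))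
    have hne : v (w a) ≠ v (∑ i ∈ s, w i) := by
      rw [hvj]
      exact fun h => ha (hinj (Set.mem_insert _ _) (Set.mem_insert_of_mem _ hj) h ▸ hj)
    obtain ⟨hadd, hvadd⟩ := hv.add_ne_zero_and_map_add_of_ne hw.1 hsum hne
    rw [Finset.sum_cons]
    refine ⟨hadd, ?_⟩
    rcases min_choice (v (w a)) (v (∑ i ∈ s, w i)) with h | h
    · exact ⟨a, Or.inl rfl, hvadd.trans h⟩
    · exact ⟨j, Or.inr hj, (hvadd.trans h).trans hvj⟩

theorem linearIndependent_mkQ [Nontrivial R] {ι : Type*} {𝔞 : Submodule K R} {F : ι → R}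
    (hF : ∀ i, F i ≠ 0) (hinj : Function.Injective (v ∘ F))
    (hmiss : ∀ i, v (F i) ∉ v '' {f | f ≠ 0 ∧ f ∈ 𝔞}) :
    LinearIndependent K (𝔞.mkQ ∘ F) := by
  classical
  rw [linearIndependent_iff']
  intro s c hc i hi
  by_contra hci
  set w : ι → R := fun i => c i • F i
  have hsum_mem : ∑ j ∈ s with w j ≠ 0, w j ∈ 𝔞 := by
    rw [Finset.sum_filter_ne_zero, ← Submodule.Quotient.mk_eq_zero, ← Submodule.mkQ_apply, map_sum]
    simp only [w, _root_.map_smul]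
    exact hc
  have hcoef : ∀ j, w j ≠ 0 → c j ≠ 0 := fun j hj h => hj (by simp [w, h])
  have hvw : ∀ j, w j ≠ 0 → v (w j) = v (F j) := fun j hj => hv.map_smul (hcoef j hj) (hF j)
  obtain ⟨hsum, j, hj, hvj⟩ := hv.sum_ne_zero_and_exists_map_sum_eq (s := s.filter (w · ≠ 0))
    ⟨i, Finset.mem_filter.2 ⟨hi, smul_ne_zero hci (hF i)⟩⟩
    (fun j hj => (Finset.mem_filter.1 hj).2)
    (fun j hj k hk h => hinj <| by
      simpa [hvw j (Finset.mem_filter.1 hj).2, hvw k (Finset.mem_filter.1 hk).2] using h)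
  exact hmiss j ⟨_, ⟨hsum, hsum_mem⟩, hvj.trans (hvw j (Finset.mem_filter.1 hj).2)⟩

theorem eq_top_of_forall_exists_mkQ_mem {𝔞 : Submodule K R} {B : Set α} (hB : B.Finite)
    (h𝔞 : ∀ f, f ≠ 0 → v f ∉ B → f ∈ 𝔞) {W : Submodule K (R ⧸ 𝔞)}
    (hW : ∀ f, f ≠ 0 → ∃ g, g ≠ 0 ∧ v g = v f ∧ 𝔞.mkQ g ∈ W) : W = ⊤ := by
  have mkQ_mem_of_mem : ∀ f ∈ 𝔞, 𝔞.mkQ f ∈ W := fun f hf => by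
    rw [Submodule.mkQ_apply, (Submodule.Quotient.mk_eq_zero 𝔞).2 hf]
    exact W.zero_mem
  -- descending induction on the value, which can only increase finitely often inside `B`
  have key : ∀ s ∈ B, ∀ f, f ≠ 0 → v f = s → 𝔞.mkQ f ∈ W := by
    intro s hs
    refine (hB.wellFoundedOn (r := (· > ·))).induction hs
      (P := fun s => ∀ f, f ≠ 0 → v f = s → 𝔞.mkQ f ∈ W) fun s _ ih f hf hfs => ?_
    obtain ⟨g, hg, hgf, hgW⟩ := hW f hf
    obtain ⟨c, -, hc⟩ := hv.oneDimLeaves hg hf hgf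
    set f' := f + algebraMap K R c * g
    have hcg : 𝔞.mkQ (algebraMap K R c * g) ∈ W := by
      rw [← Algebra.smul_def, _root_.map_smul]
      exact W.smul_mem c hgW
    suffices 𝔞.mkQ f' ∈ W by simpa [f'] using W.sub_mem this hcg
    by_cases hf' : f' = 0
    · simp [hf']
    by_cases hB' : v f' ∈ B
    · exact ih _ hB' (hfs ▸ hc.resolve_left hf') f' hf' rfl
    · exact mkQ_mem_of_mem f' (h𝔞 f' hf' hB')
  refine Submodule.eq_top_iff'.2 fun q => ?_
  obtain ⟨f, rfl⟩ := 𝔞.mkQ_surjective q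
  by_cases hf : f = 0
  · simp [hf]
  by_cases hfB : v f ∈ B
  · exact key _ hfB f hf rfl
  · exact mkQ_mem_of_mem f (h𝔞 f hf hfB)

theorem finrank_quotient_eq_ncard [Nontrivial R] {𝔞 : Submodule K R} {B : Set α}
    (hB : B.Finite) (h𝔞 : ∀ f, f ≠ 0 → v f ∉ B → f ∈ 𝔞) :
    (v '' {f | f ≠ 0} \ v '' {f | f ≠ 0 ∧ f ∈ 𝔞}).Finite ∧
      finrank K (R ⧸ 𝔞) = (v '' {f | f ≠ 0} \ v '' {f | f ≠ 0 ∧ f ∈ 𝔞}).ncard := by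
  set T := v '' {f | f ≠ 0} \ v '' {f | f ≠ 0 ∧ f ∈ 𝔞}
  have hTB : T ⊆ B := by
    rintro _ ⟨⟨f, hf, rfl⟩, hI⟩
    by_contra hfB
    exact hI ⟨f, ⟨hf, h𝔞 f hf hfB⟩, rfl⟩
  refine ⟨hB.subset hTB, ?_⟩
  choose F hF0 hFv using fun s : T => s.2.1
  have hli : LinearIndependent K (𝔞.mkQ ∘ F) :=
    hv.linearIndependent_mkQ hF0 (fun s t h => Subtype.ext <| by simpa [hFv] using h)
      (fun s => hFv s ▸ s.2.2)
  have hspan : Submodule.span K (Set.range (𝔞.mkQ ∘ F)) = ⊤ := by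
    refine hv.eq_top_of_forall_exists_mkQ_mem hB h𝔞 fun f hf => ?_
    by_cases hI : v f ∈ v '' {f | f ≠ 0 ∧ f ∈ 𝔞}
    · obtain ⟨g, ⟨hg, hg𝔞⟩, hgf⟩ := hI
      refine ⟨g, hg, hgf, ?_⟩
      rw [Submodule.mkQ_apply, (Submodule.Quotient.mk_eq_zero 𝔞).2 hg𝔞]
      exact Submodule.zero_mem _
    · let s : T := ⟨v f, ⟨f, hf, rfl⟩, hI⟩
      exact ⟨F s, hF0 s, hFv s, Submodule.subset_span ⟨s, rfl⟩⟩
  rw [finrank_eq_nat_card_basis (Basis.mk hli hspan.ge), Nat.card_coe_set_eq]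

/-- The value semigroup; the paper's `∪ {0}` is redundant since `v 1 = 0`. -/
def valueSemigroup [IsDomain R] : AddSubmonoid α where
  carrier := v '' {f | f ≠ 0}
  zero_mem' := ⟨1, one_ne_zero, hv.map_one⟩
  add_mem' := by
    rintro _ _ ⟨f, hf, rfl⟩ ⟨g, hg, rfl⟩
    exact ⟨f * g, mul_ne_zero hf hg, hv.map_mul hf hg⟩

end IsValuationWithOneDimLeaves

theorem AddSubmonoid.smul_mem_of_convex {𝕜 E : Type*} [Field 𝕜] [LinearOrder 𝕜]
    [IsStrictOrderedRing 𝕜] [Archimedean 𝕜] [AddCommGroup E] [Module 𝕜 E] (A : AddSubmonoid E)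
    (hA : Convex 𝕜 (A : Set E)) {x : E} (hx : x ∈ A) {c : 𝕜} (hc : 0 ≤ c) : c • x ∈ A := by
  obtain ⟨n, hn⟩ := exists_nat_ge c
  have hn₀ : (0 : 𝕜) < n + 1 := by positivity
  -- `c • x` is a convex combination of `0` and `(n + 1) • x`
  have hcx : c • x = (c / (n + 1)) • ((n + 1 : ℕ) • x) := by
    rw [← Nat.cast_smul_eq_nsmul 𝕜, smul_smul, Nat.cast_succ, div_mul_cancel₀ _ hn₀.ne']
  rw [hcx]
  exact hA.smul_mem_of_zero_mem A.zero_mem (A.nsmul_mem hx _)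
    ⟨div_nonneg hc hn₀.le, (div_le_one hn₀).2 (by linarith)⟩

def AddSubmonoid.convexHull (𝕜 : Type*) {E : Type*} [Field 𝕜] [LinearOrder 𝕜]
    [IsStrictOrderedRing 𝕜] [AddCommGroup E] [Module 𝕜 E] (A : AddSubmonoid E) :
    AddSubmonoid E where
  carrier := _root_.convexHull 𝕜 (A : Set E)
  zero_mem' := subset_convexHull 𝕜 _ A.zero_mem
  add_mem' hx hy := by
    refine convexHull_mono (Set.add_subset_iff.2 fun _ ha _ hb => A.add_mem ha hb) ?_
    rw [convexHull_add]
    exact Set.add_mem_add hx hy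

theorem smul_mem_closure_convexHull {𝕜 E : Type*} [Field 𝕜] [LinearOrder 𝕜]
    [IsStrictOrderedRing 𝕜] [Archimedean 𝕜] [AddCommGroup E] [Module 𝕜 E] [TopologicalSpace E]
    [IsTopologicalAddGroup E] [ContinuousConstSMul 𝕜 E] (A : AddSubmonoid E) {x : E}
    (hx : x ∈ closure (convexHull 𝕜 (A : Set E))) {c : 𝕜} (hc : 0 ≤ c) :
    c • x ∈ closure (convexHull 𝕜 (A : Set E)) :=
  (A.convexHull 𝕜).topologicalClosure.smul_mem_of_convex (convex_convexHull 𝕜 _).closure hx hc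

theorem isBounded_setOf_le_of_isCone {E : Type*} [NormedAddCommGroup E] [NormedSpace ℝ E]
    [FiniteDimensional ℝ E] {C : Set E} (hC : IsClosed C)
    (hcone : ∀ x ∈ C, ∀ c : ℝ, 0 ≤ c → c • x ∈ C) (ℓ : E →ₗ[ℝ] ℝ)
    (hℓ : ∀ x ∈ C, x ≠ 0 → 0 < ℓ x) (b : ℝ) : Bornology.IsBounded {x ∈ C | ℓ x ≤ b} := by
  obtain ⟨ε, hε, hεℓ⟩ := ((isCompact_sphere (0 : E) 1).inter_left hC).exists_forall_le'
    ℓ.continuous_of_finiteDimensional.continuousOn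
    fun y hy => hℓ y hy.1 (ne_zero_of_mem_unit_sphere ⟨y, hy.2⟩)
  have hlin : ∀ x ∈ C, ε * ‖x‖ ≤ ℓ x := by
    intro x hx
    rcases eq_or_ne x 0 with rfl | hx₀
    · simp
    have hnorm : 0 < ‖x‖ := norm_pos_iff.2 hx₀
    have := hεℓ (‖x‖⁻¹ • x) ⟨hcone x hx _ (inv_nonneg.2 hnorm.le), by simp [norm_smul, hnorm.ne']⟩
    rw [map_smul, smul_eq_mul, le_inv_mul_iff₀ hnorm] at this
    linarith
  refine (Metric.isBounded_closedBall (x := (0 : E)) (r := b / ε)).subset fun x hx => ?_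
  rw [mem_closedBall_zero_iff, le_div_iff₀ hε]
  linarith [hlin x hx.1, hx.2]

theorem norm_zToR {n : ℕ} (x : Fin n → ℤ) : ‖zToR x‖ = ‖x‖ :=
  rfl

theorem finite_preimage_zToR {n : ℕ} {s : Set (Fin n → ℝ)} (hs : Bornology.IsBounded s) :
    (zToR ⁻¹' s).Finite := by
  obtain ⟨M, hM⟩ := hs.subset_closedBall 0
  refine (isCompact_closedBall (0 : Fin n → ℤ) M).finite_of_discrete.subset fun x hx => ?_
  simpa [norm_zToR] using hM hx

theorem codim_eq_card_of_missing_values_general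
    (n : ℕ) (K : Type) [Field K] (R : Type) [CommRing R] [IsDomain R]
    [IsLocalRing R] [Algebra K R]
    (ord : LinearOrder (Fin n → ℤ))
    (v : R → Fin n → ℤ)
    (hv1 : ∀ f g : R, f ≠ 0 → g ≠ 0 → v (f * g) = v f + v g)
    (hv2 : ∀ f g : R, f ≠ 0 → g ≠ 0 → f + g ≠ 0 →
      ord.le (ord.min (v f) (v g)) (v (f + g)))
    (hv3 : ∀ c : K, c ≠ 0 → v (algebraMap K R c) = 0)
    (hv4 : ∀ f g : R, f ≠ 0 → g ≠ 0 → v f = v g → ∃ c : K, c ≠ 0 ∧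
      (g + algebraMap K R c * f = 0 ∨ ord.lt (v g) (v (g + algebraMap K R c * f))))
    (S : Set (Fin n → ℤ)) (hS : S = v '' {f : R | f ≠ 0} ∪ {0})
    (C : Set (Fin n → ℝ)) (hC : C = closure (convexHull ℝ (zToR '' S)))
    (ℓ : (Fin n → ℝ) →ₗ[ℝ] ℝ)
    (hℓnonneg : ∀ x ∈ C, 0 ≤ ℓ x) (hℓker : ∀ x ∈ C, ℓ x = 0 → x = 0)
    (r₀ : ℝ)
    (hgood : ∀ f : R, f ≠ 0 → ∀ k : ℕ, 0 < k →
      (k : ℝ) * r₀ ≤ ℓ (zToR (v f)) → f ∈ IsLocalRing.maximalIdeal R ^ k)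
    (𝔞 : Submodule K R)
    (t : ℕ) (ht : 0 < t)
    (haprim : ∀ f ∈ IsLocalRing.maximalIdeal R ^ t, f ∈ 𝔞)
    (I : Set (Fin n → ℤ)) (hI : I = v '' {f : R | f ≠ 0 ∧ f ∈ 𝔞}) :
    (S \ I).Finite ∧ Module.finrank K (R ⧸ 𝔞) = (S \ I).ncard := by
  -- the valuation's order is `ord`, not the pointwise order on `Fin n → ℤ`
  let := ord
  have hv : IsValuationWithOneDimLeaves K v := ⟨hv1 _ _, hv2 _ _, hv3 _, hv4 _ _⟩
  have hSv : S = hv.valueSemigroup := by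
    rw [hS, Set.union_singleton]
    exact Set.insert_eq_of_mem hv.valueSemigroup.zero_mem
  have hSC : ∀ s ∈ S, zToR s ∈ C := fun s hs =>
    hC ▸ subset_closure (subset_convexHull ℝ _ ⟨s, hs, rfl⟩)
  have hcone : ∀ x ∈ C, ∀ c : ℝ, 0 ≤ c → c • x ∈ C := by
    subst hC
    have himage : zToR '' S = hv.valueSemigroup.map ((Int.castAddHom ℝ).compLeft (Fin n)) := by
      rw [hSv]; rfl
    rw [himage]
    exact fun x hx c hc => smul_mem_closure_convexHull _ hx hc
  have hB : (zToR ⁻¹' {x ∈ C | ℓ x ≤ t * r₀}).Finite :=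
    finite_preimage_zToR <| isBounded_setOf_le_of_isCone (hC ▸ isClosed_closure) hcone ℓ
      (fun x hx hx₀ => (hℓnonneg x hx).lt_of_ne fun h => hx₀ (hℓker x hx h.symm)) _
  have h𝔞 : ∀ f, f ≠ 0 → v f ∉ zToR ⁻¹' {x ∈ C | ℓ x ≤ t * r₀} → f ∈ 𝔞 := fun f hf hfB =>
    haprim f <| hgood f hf t ht (not_le.1 fun h => hfB ⟨hSC _ (hSv ▸ ⟨f, hf, rfl⟩), h⟩).le
  rw [hI, hSv]
  exact hv.finrank_quotient_eq_ncard hB h𝔞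

/-- **Codimension equals the number of missing values**: for a good valuation `v` on `R`
and an `𝔪`-primary `k`-subspace `𝔞 ⊆ R`, the complement `S ∖ I(𝔞)` of the value set of
`𝔞` in the value semigroup is finite and `dim_k(R/𝔞) = #(S ∖ I(𝔞))`. -/
theorem codim_eq_card_of_missing_values
    (n : ℕ) (K : Type) [Field K] (R : Type) [CommRing R] [IsDomain R]
    [IsNoetherianRing R] [IsLocalRing R] [Algebra K R]
    (hdim : ringKrullDim R = n)
    (hres : Function.Bijective
      ((Ideal.Quotient.mk (IsLocalRing.maximalIdeal R)).comp (algebraMap K R)))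
    (ord : LinearOrder (Fin n → ℤ))
    (hord : ∀ a b c : Fin n → ℤ, ord.le a b → ord.le (a + c) (b + c))
    (v : R → Fin n → ℤ)
    (hv1 : ∀ f g : R, f ≠ 0 → g ≠ 0 → v (f * g) = v f + v g)
    (hv2 : ∀ f g : R, f ≠ 0 → g ≠ 0 → f + g ≠ 0 →
      ord.le (ord.min (v f) (v g)) (v (f + g)))
    (hv3 : ∀ c : K, c ≠ 0 → v (algebraMap K R c) = 0)
    (hv4 : ∀ f g : R, f ≠ 0 → g ≠ 0 → v f = v g → ∃ c : K, c ≠ 0 ∧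
      (g + algebraMap K R c * f = 0 ∨ ord.lt (v g) (v (g + algebraMap K R c * f))))
    (S : Set (Fin n → ℤ)) (hS : S = v '' {f : R | f ≠ 0} ∪ {0})
    (C : Set (Fin n → ℝ)) (hC : C = closure (convexHull ℝ (zToR '' S)))
    (hCsalient : ∀ x ∈ C, -x ∈ C → x = 0)
    (ℓ : (Fin n → ℝ) →ₗ[ℝ] ℝ)
    (hℓnonneg : ∀ x ∈ C, 0 ≤ ℓ x) (hℓker : ∀ x ∈ C, ℓ x = 0 → x = 0)
    (r₀ : ℝ) (hr₀ : 0 < r₀)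
    (hgood : ∀ f : R, f ≠ 0 → ∀ k : ℕ, 0 < k →
      (k : ℝ) * r₀ ≤ ℓ (zToR (v f)) → f ∈ IsLocalRing.maximalIdeal R ^ k)
    (𝔞 : Submodule K R)
    (t : ℕ) (ht : 0 < t)
    (haprim : ∀ f ∈ IsLocalRing.maximalIdeal R ^ t, f ∈ 𝔞)
    (I : Set (Fin n → ℤ)) (hI : I = v '' {f : R | f ≠ 0 ∧ f ∈ 𝔞}) :
    (S \ I).Finite ∧ Module.finrank K (R ⧸ 𝔞) = (S \ I).ncard :=
  codim_eq_card_of_missing_values_general n K R ord v hv1 hv2 hv3 hv4 S hS C hC ℓ hℓnonneg hℓker r₀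
    hgood 𝔞 t ht haprim I hI
end

section
/- Let k be a field, R an n-dimensional Noetherian local domain with maximal ideal 𝔪 which is a k-algebra with k → R/𝔪 an isomorphism, and let v: R∖{0} → ℤⁿ be a good valuation on R. Let 𝔞• and 𝔟• be 𝔪-primary graded sequences of k-subspaces of R, and let 𝔞•𝔟• be the graded sequence with (𝔞•𝔟•)_k = 𝔞_k𝔟_k (the k-span of products). Then Γ(𝔞•) + Γ(𝔟•) ⊆ Γ(𝔞•𝔟•), where + denotes the Minkowski sum and Γ(𝔠•) denotes the closure of the convex hull of ⋃_{k>0} {v(f)/k : 0 ≠ f ∈ 𝔠_k}. -/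
open MeasureTheory Pointwise Filter

/-!
If `v f / k` and `v g / m` are normalized values of `f ∈ 𝔞_k` and `g ∈ 𝔟_m`, then
`f ^ m * g ^ k ∈ 𝔞_{km} 𝔟_{km}` has normalized value `v f / k + v g / m`. So the Minkowski sum of
the generating sets of `Γ(𝔞•)` and `Γ(𝔟•)` lies in that of `Γ(𝔞•𝔟•)`, and Minkowski sums commute
with convex hulls and are continuous, which passes the inclusion to closed convex hulls.
-/

open Set

theorem pow_mem_of_graded {K R : Type*} [Semiring K] [Semiring R] [Module K R]
    {a : ℕ → Submodule K R}
    (hamul : ∀ k m : ℕ, 0 < k → 0 < m → ∀ f ∈ a k, ∀ g ∈ a m, f * g ∈ a (k + m))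
    {k : ℕ} (hk : 0 < k) {f : R} (hf : f ∈ a k) {m : ℕ} (hm : 0 < m) :
    f ^ m ∈ a (m * k) := by
  induction m with
  | zero => omega
  | succ m ih =>
    rcases Nat.eq_zero_or_pos m with rfl | hm
    · simpa using hf
    · rw [add_mul, one_mul, pow_succ]
      exact hamul _ _ (by positivity) hk _ (ih hm) _ hf

theorem map_pow_of_map_mul {R M : Type*} [MonoidWithZero R] [NoZeroDivisors R] [AddMonoid M]
    {v : R → M} (hv : ∀ f g : R, f ≠ 0 → g ≠ 0 → v (f * g) = v f + v g)
    {f : R} (hf : f ≠ 0) {m : ℕ} (hm : 0 < m) : v (f ^ m) = m • v f := by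
  induction m with
  | zero => omega
  | succ m ih =>
    rcases Nat.eq_zero_or_pos m with rfl | hm
    · simp
    · rw [pow_succ, hv _ _ (pow_ne_zero _ hf) hf, ih hm, succ_nsmul]

theorem inv_smul_zToR_nsmul_add_nsmul {n k m : ℕ} (hk : 0 < k) (hm : 0 < m)
    (x y : Fin n → ℤ) :
    ((k * m : ℕ) : ℝ)⁻¹ • zToR (m • x + k • y) = (k : ℝ)⁻¹ • zToR x + (m : ℝ)⁻¹ • zToR y := by
  funext i
  simp only [zToR, Pi.smul_apply, Pi.add_apply, smul_eq_mul]
  push_cast [nsmul_eq_mul]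
  field_simp

/-- The set `⋃_{k>0} {v(f)/k : 0 ≠ f ∈ 𝔞_k}` whose closed convex hull is `Γ(𝔞•)`. -/
def normalizedValues {n : ℕ} {K R : Type*} [Semiring K] [Semiring R] [Module K R]
    (v : R → Fin n → ℤ) (a : ℕ → Submodule K R) : Set (Fin n → ℝ) :=
  ⋃ k : ℕ, ⋃ _ : 0 < k, (fun x => ((k : ℝ))⁻¹ • zToR x) '' (v '' {f : R | f ≠ 0 ∧ f ∈ a k})

theorem normalizedValues_add_subset {n : ℕ} {K R : Type*} [CommSemiring K] [Semiring R]
    [NoZeroDivisors R] [Algebra K R] {v : R → Fin n → ℤ}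
    (hv : ∀ f g : R, f ≠ 0 → g ≠ 0 → v (f * g) = v f + v g) {a b : ℕ → Submodule K R}
    (hamul : ∀ k m : ℕ, 0 < k → 0 < m → ∀ f ∈ a k, ∀ g ∈ a m, f * g ∈ a (k + m))
    (hbmul : ∀ k m : ℕ, 0 < k → 0 < m → ∀ f ∈ b k, ∀ g ∈ b m, f * g ∈ b (k + m)) :
    normalizedValues v a + normalizedValues v b ⊆ normalizedValues v (fun k => a k * b k) := by
  rintro _ ⟨_, hx, _, hy, rfl⟩
  simp only [normalizedValues, mem_iUnion, mem_image] at hx hy ⊢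
  obtain ⟨k, hk, _, ⟨f, ⟨hf0, hfa⟩, rfl⟩, rfl⟩ := hx
  obtain ⟨m, hm, _, ⟨g, ⟨hg0, hgb⟩, rfl⟩, rfl⟩ := hy
  have hfm : f ^ m ∈ a (k * m) := mul_comm m k ▸ pow_mem_of_graded hamul hk hfa hm
  have hgk : g ^ k ∈ b (k * m) := pow_mem_of_graded hbmul hm hgb hk
  have hfm0 : f ^ m ≠ 0 := pow_ne_zero _ hf0
  have hgk0 : g ^ k ≠ 0 := pow_ne_zero _ hg0
  refine ⟨k * m, by positivity, _,
    ⟨f ^ m * g ^ k, ⟨mul_ne_zero hfm0 hgk0, Submodule.mul_mem_mul hfm hgk⟩, rfl⟩, ?_⟩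
  rw [hv _ _ hfm0 hgk0, map_pow_of_map_mul hv hf0 hm,
    map_pow_of_map_mul hv hg0 hk, inv_smul_zToR_nsmul_add_nsmul hk hm]

theorem closure_convexHull_add_subset {E : Type*} [AddCommGroup E] [Module ℝ E]
    [TopologicalSpace E] [ContinuousAdd E] {s t u : Set E} (h : s + t ⊆ u) :
    closure (convexHull ℝ s) + closure (convexHull ℝ t) ⊆ closure (convexHull ℝ u) := by
  rintro _ ⟨x, hx, y, hy, rfl⟩
  refine closure_mono ?_ (map_mem_closure₂ continuous_add hx hy fun _ hp _ hq ↦ add_mem_add hp hq)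
  rw [← convexHull_add]
  exact convexHull_mono h

theorem gamma_superadditive_general
    (n : ℕ) (K : Type) [Field K] (R : Type) [CommRing R] [IsDomain R]
    [Algebra K R]
    (v : R → Fin n → ℤ)
    (hv1 : ∀ f g : R, f ≠ 0 → g ≠ 0 → v (f * g) = v f + v g)
    (a b : ℕ → Submodule K R)
    (hamul : ∀ k m : ℕ, 0 < k → 0 < m → ∀ f ∈ a k, ∀ g ∈ a m, f * g ∈ a (k + m))
    (hbmul : ∀ k m : ℕ, 0 < k → 0 < m → ∀ f ∈ b k, ∀ g ∈ b m, f * g ∈ b (k + m))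
    (Γa Γb Γab : Set (Fin n → ℝ))
    (hΓa : Γa = closure (convexHull ℝ (⋃ k : ℕ, ⋃ _ : 0 < k,
      (fun x => ((k : ℝ))⁻¹ • zToR x) '' (v '' {f : R | f ≠ 0 ∧ f ∈ a k}))))
    (hΓb : Γb = closure (convexHull ℝ (⋃ k : ℕ, ⋃ _ : 0 < k,
      (fun x => ((k : ℝ))⁻¹ • zToR x) '' (v '' {f : R | f ≠ 0 ∧ f ∈ b k}))))
    (hΓab : Γab = closure (convexHull ℝ (⋃ k : ℕ, ⋃ _ : 0 < k,
      (fun x => ((k : ℝ))⁻¹ • zToR x) '' (v '' {f : R | f ≠ 0 ∧ f ∈ a k * b k})))) :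
    Γa + Γb ⊆ Γab := by
  subst hΓa hΓb hΓab
  exact closure_convexHull_add_subset (normalizedValues_add_subset hv1 hamul hbmul)

/-- **Superadditivity of the convex regions**: for `𝔪`-primary graded sequences of
subspaces `𝔞•`, `𝔟•` in a local domain with a good valuation,
`Γ(𝔞•) + Γ(𝔟•) ⊆ Γ(𝔞•𝔟•)` (Minkowski sum). -/
theorem gamma_superadditive
    (n : ℕ) (K : Type) [Field K] (R : Type) [CommRing R] [IsDomain R]
    [IsNoetherianRing R] [IsLocalRing R] [Algebra K R]
    (hdim : ringKrullDim R = n)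
    (hres : Function.Bijective
      ((Ideal.Quotient.mk (IsLocalRing.maximalIdeal R)).comp (algebraMap K R)))
    (ord : LinearOrder (Fin n → ℤ))
    (hord : ∀ a b c : Fin n → ℤ, ord.le a b → ord.le (a + c) (b + c))
    (v : R → Fin n → ℤ)
    (hv1 : ∀ f g : R, f ≠ 0 → g ≠ 0 → v (f * g) = v f + v g)
    (hv2 : ∀ f g : R, f ≠ 0 → g ≠ 0 → f + g ≠ 0 →
      ord.le (ord.min (v f) (v g)) (v (f + g)))
    (hv3 : ∀ c : K, c ≠ 0 → v (algebraMap K R c) = 0)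
    (hv4 : ∀ f g : R, f ≠ 0 → g ≠ 0 → v f = v g → ∃ c : K, c ≠ 0 ∧
      (g + algebraMap K R c * f = 0 ∨ ord.lt (v g) (v (g + algebraMap K R c * f))))
    (S : Set (Fin n → ℤ)) (hS : S = v '' {f : R | f ≠ 0} ∪ {0})
    (C : Set (Fin n → ℝ)) (hC : C = closure (convexHull ℝ (zToR '' S)))
    (hCsalient : ∀ x ∈ C, -x ∈ C → x = 0)
    (ℓ : (Fin n → ℝ) →ₗ[ℝ] ℝ)
    (hℓnonneg : ∀ x ∈ C, 0 ≤ ℓ x) (hℓker : ∀ x ∈ C, ℓ x = 0 → x = 0)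
    (r₀ : ℝ) (hr₀ : 0 < r₀)
    (hgood : ∀ f : R, f ≠ 0 → ∀ k : ℕ, 0 < k →
      (k : ℝ) * r₀ ≤ ℓ (zToR (v f)) → f ∈ IsLocalRing.maximalIdeal R ^ k)
    (a b : ℕ → Submodule K R)
    (hamul : ∀ k m : ℕ, 0 < k → 0 < m → ∀ f ∈ a k, ∀ g ∈ a m, f * g ∈ a (k + m))
    (hbmul : ∀ k m : ℕ, 0 < k → 0 < m → ∀ f ∈ b k, ∀ g ∈ b m, f * g ∈ b (k + m))
    (ta : ℕ) (hta : 0 < ta)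
    (haprim : ∀ f ∈ IsLocalRing.maximalIdeal R ^ ta, f ∈ a 1)
    (tb : ℕ) (htb : 0 < tb)
    (hbprim : ∀ f ∈ IsLocalRing.maximalIdeal R ^ tb, f ∈ b 1)
    (Γa Γb Γab : Set (Fin n → ℝ))
    (hΓa : Γa = closure (convexHull ℝ (⋃ k : ℕ, ⋃ _ : 0 < k,
      (fun x => ((k : ℝ))⁻¹ • zToR x) '' (v '' {f : R | f ≠ 0 ∧ f ∈ a k}))))
    (hΓb : Γb = closure (convexHull ℝ (⋃ k : ℕ, ⋃ _ : 0 < k,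
      (fun x => ((k : ℝ))⁻¹ • zToR x) '' (v '' {f : R | f ≠ 0 ∧ f ∈ b k}))))
    (hΓab : Γab = closure (convexHull ℝ (⋃ k : ℕ, ⋃ _ : 0 < k,
      (fun x => ((k : ℝ))⁻¹ • zToR x) '' (v '' {f : R | f ≠ 0 ∧ f ∈ a k * b k})))) :
    Γa + Γb ⊆ Γab :=
  gamma_superadditive_general n K R v hv1 a b hamul hbmul Γa Γb Γab hΓa hΓb hΓab
end
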